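/- arXiv:2106.01260 — 2 statements merged into one kernel-verified Lean document; each statement's English description precedes it below -/
import Mathlib

section
/- In the additive-kernel setting, for any a, b ∈ ℳ define ζ̃_t := ψ(φ⁻¹(a)) + t[ψ(φ⁻¹(b)) − ψ(φ⁻¹(a))] for t ∈ [0,1] and γ̃_t := φ(ψ⁻¹(ζ̃_t)), where ψ⁻¹ denotes the coordinatewise inverse of ψ. Then γ̃ is a path in ℳ with end-points a, b and l(γ̃) = ‖ψ(φ⁻¹(b)) − ψ(φ⁻¹(a))‖. -/
open Set
open scoped ENNReal BigOperators

noncomputable section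

/-- The real Hilbert space ℓ² of square-summable real sequences. -/
abbrev l2 : Type := lp (fun _ : ℕ => ℝ) 2

/-- A partition `0 = t₀ ≤ t₁ ≤ … ≤ t_n = 1` of `[0,1]`. -/
structure PathPartition where
  n : ℕ
  t : ℕ → ℝ
  first : t 0 = 0
  last : t n = 1
  mono : ∀ k, k < n → t k ≤ t (k + 1)

/-- The set of points of a partition. -/
def PathPartition.points (P : PathPartition) : Set ℝ := {x | ∃ k ≤ P.n, P.t k = x}

/-- `χ(γ, 𝒫) = ∑ₖ ‖γ_{t_k} − γ_{t_{k−1}}‖`. -/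
def chiSum {E : Type*} [NormedAddCommGroup E] (γ : ℝ → E) (P : PathPartition) : ℝ :=
  ∑ k ∈ Finset.range P.n, ‖γ (P.t (k + 1)) - γ (P.t k)‖

/-- The length of a path: the supremum over all partitions of `χ(γ, 𝒫)`. -/
def pathLength {E : Type*} [NormedAddCommGroup E] (γ : ℝ → E) : ℝ≥0∞ :=
  ⨆ P : PathPartition, ENNReal.ofReal (chiSum γ P)

/-- A path in `S` with end-points `a, b`: a continuous map `γ : [0,1] → S`
with `γ 0 = a` and `γ 1 = b`. -/
def IsPathIn {E : Type*} [NormedAddCommGroup E] (S : Set E) (a b : E) (γ : ℝ → E) : Prop :=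
  ContinuousOn γ (Icc 0 1) ∧ (∀ t ∈ Icc (0:ℝ) 1, γ t ∈ S) ∧ γ 0 = a ∧ γ 1 = b

/-- Geodesic distance in `S`: the infimum of path-lengths over paths in `S` joining `a, b`. -/
def geodesicDist {E : Type*} [NormedAddCommGroup E] (S : Set E) (a b : E) : ℝ≥0∞ :=
  ⨅ γ : {γ : ℝ → E // IsPathIn S a b γ}, pathLength γ.val

/-- The mixed second partial derivative `∂²F/∂x∂y` evaluated at `(z, z)`. -/
def mixedPartial (F : ℝ → ℝ → ℝ) (z : ℝ) : ℝ :=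
  deriv (fun y : ℝ => deriv (fun x : ℝ => F x y) z) z

/-- The coordinatewise monotone transformation
`ψ_i(x^{(i)}) = α_i^{1/2} ∫_{c_i⁻}^{x^{(i)}} (∂²f_i/∂x∂y |_{(ξ,ξ)})^{1/2} dξ`. -/
def psiMap {d : ℕ} (α : Fin d → ℝ) (fi : Fin d → ℝ → ℝ → ℝ) (cl : Fin d → ℝ)
    (x : EuclideanSpace ℝ (Fin d)) : EuclideanSpace ℝ (Fin d) :=
  WithLp.toLp 2 (fun i => Real.sqrt (α i) * ∫ ξ in (cl i)..(x i), Real.sqrt (mixedPartial (fi i) ξ))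


namespace AKSL
open intervalIntegral Filter Topology


/-- mixed partial as fderiv of fderiv -/
def Kmix (F : ℝ × ℝ → ℝ) (p : ℝ × ℝ) : ℝ :=
  fderiv ℝ (fun q => fderiv ℝ F q (1, 0)) p (0, 1)

variable {F : ℝ × ℝ → ℝ}

lemma hasDerivAt_fst (hF : ContDiff ℝ 2 F) (u v : ℝ) :
    HasDerivAt (fun x => F (x, v)) (fderiv ℝ F (u, v) (1, 0)) u := by
  have h1 : HasFDerivAt F (fderiv ℝ F (u, v)) (u, v) :=
    (hF.differentiable (by norm_num)).differentiableAt.hasFDerivAt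
  have h2 : HasDerivAt (fun x : ℝ => (x, v)) ((1 : ℝ), (0 : ℝ)) u :=
    (hasDerivAt_id u).prodMk (hasDerivAt_const u v)
  exact h1.comp_hasDerivAt u h2

lemma contDiff_G (hF : ContDiff ℝ 2 F) :
    ContDiff ℝ 1 (fun p => fderiv ℝ F p (1, 0)) :=
  (hF.fderiv_right (le_refl 2)).clm_apply contDiff_const

lemma hasDerivAt_snd_G (hF : ContDiff ℝ 2 F) (u v : ℝ) :
    HasDerivAt (fun y => fderiv ℝ F (u, y) (1, 0)) (Kmix F (u, v)) v := by
  set G := fun p => fderiv ℝ F p (1, 0) with hGdef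
  have h1 : HasFDerivAt G (fderiv ℝ G (u, v)) (u, v) :=
    ((contDiff_G hF).differentiable one_ne_zero).differentiableAt.hasFDerivAt
  have h2 : HasDerivAt (fun y : ℝ => (u, y)) ((0 : ℝ), (1 : ℝ)) v :=
    (hasDerivAt_const v u).prodMk (hasDerivAt_id v)
  exact h1.comp_hasDerivAt v h2

lemma continuous_Kmix (hF : ContDiff ℝ 2 F) : Continuous (Kmix F) := by
  have h1 : Continuous (fderiv ℝ (fun p => fderiv ℝ F p (1, 0))) :=
    (contDiff_G hF).continuous_fderiv one_ne_zero
  exact h1.clm_apply continuous_const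

lemma mixedPartial_eq_Kmix (hF : ContDiff ℝ 2 (fun p : ℝ × ℝ => F p)) (z : ℝ)
    {Fc : ℝ → ℝ → ℝ} (hFc : ∀ x y, Fc x y = F (x, y)) :
    mixedPartial Fc z = Kmix F (z, z) := by
  have h1 : (fun y => deriv (fun x => Fc x y) z) = fun y => fderiv ℝ F (z, y) (1, 0) := by
    funext y
    simp only [hFc]
    exact (hasDerivAt_fst hF z y).deriv
  rw [mixedPartial, h1]
  exact (hasDerivAt_snd_G hF z z).deriv

lemma sd_eq_integral (hF : ContDiff ℝ 2 F) (s0 s1 t0 t1 : ℝ) :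
    (∫ u in s0..s1, ∫ v in t0..t1, Kmix F (u, v)) =
      F (s1, t1) - F (s1, t0) - F (s0, t1) + F (s0, t0) := by
  have hKcont := continuous_Kmix hF
  have hGcont : Continuous (fun p => fderiv ℝ F p (1, 0)) := (contDiff_G hF).continuous
  have inner : ∀ u : ℝ, (∫ v in t0..t1, Kmix F (u, v)) =
      fderiv ℝ F (u, t1) (1, 0) - fderiv ℝ F (u, t0) (1, 0) := by
    intro u
    refine integral_eq_sub_of_hasDerivAt (fun v _ => hasDerivAt_snd_G hF u v) ?_
    exact (hKcont.comp (continuous_const.prodMk continuous_id)).intervalIntegrable _ _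
  have h2 : (fun u => ∫ v in t0..t1, Kmix F (u, v)) =
      fun u => fderiv ℝ F (u, t1) (1, 0) - fderiv ℝ F (u, t0) (1, 0) := funext inner
  rw [h2]
  have hint : ∀ t : ℝ, IntervalIntegrable (fun u => fderiv ℝ F (u, t) (1, 0))
      MeasureTheory.volume s0 s1 := fun t =>
    (hGcont.comp (continuous_id.prodMk continuous_const)).intervalIntegrable _ _
  rw [integral_sub (hint t1) (hint t0)]
  have outer : ∀ t : ℝ, (∫ u in s0..s1, fderiv ℝ F (u, t) (1, 0)) = F (s1, t) - F (s0, t) := by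
    intro t
    exact integral_eq_sub_of_hasDerivAt (fun u _ => hasDerivAt_fst hF u t) (hint t)
  rw [outer t1, outer t0]
  ring




def SD (F : ℝ × ℝ → ℝ) (a b a' b' : ℝ) : ℝ := F (b,b') - F (b,a') - F (a,b') + F (a,a')

variable {F : ℝ × ℝ → ℝ} {c c' : ℝ}


lemma sd_eq_integral' (hF : ContDiff ℝ 2 F) (a b a' b' : ℝ) :
    SD F a b a' b' = ∫ u in a..b, ∫ v in a'..b', Kmix F (u,v) := by
  rw [sd_eq_integral hF, SD]

lemma tendsto_sd (hF : ContDiff ℝ 2 F) {u v : ℝ} (hu : c ≤ u) (hv : c ≤ v) :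
    Tendsto (fun e : ℝ => SD F (max c (u-e)) (max c (u-e)+e) (max c (v-e)) (max c (v-e)+e) / e^2)
      (𝓝[>] (0:ℝ)) (𝓝 (Kmix F (u,v))) := by
  rw [Metric.tendsto_nhdsWithin_nhds]
  intro ε hε
  have hKc : ContinuousAt (Kmix F) (u, v) := (continuous_Kmix hF).continuousAt
  rw [Metric.continuousAt_iff] at hKc
  obtain ⟨δ, hδ, hKδ⟩ := hKc (ε/2) (by positivity)
  refine ⟨δ, hδ, ?_⟩
  intro e he hdist
  have he' : (0:ℝ) < e := he
  rw [Real.dist_eq, sub_zero, abs_of_pos he'] at hdist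
  set u0 := max c (u - e) with hu0
  set v0 := max c (v - e) with hv0
  -- basic position facts
  have hu0le : u0 ≤ u := max_le (hu) (by linarith)
  have hu0ge : u - e ≤ u0 := le_max_right _ _
  have hv0le : v0 ≤ v := max_le (hv) (by linarith)
  have hv0ge : v - e ≤ v0 := le_max_right _ _
  -- pointwise bound on the square
  have hptbound : ∀ u' v' : ℝ, u0 ≤ u' → u' ≤ u0 + e → v0 ≤ v' → v' ≤ v0 + e →
      |Kmix F (u', v') - Kmix F (u, v)| ≤ ε/2 := by
    intro u' v' h1 h2 h3 h4
    have : dist (u', v') (u, v) < δ := by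
      rw [Prod.dist_eq]
      have d1 : dist u' u < δ := by
        rw [Real.dist_eq, abs_lt]; constructor <;> nlinarith
      have d2 : dist v' v < δ := by
        rw [Real.dist_eq, abs_lt]; constructor <;> nlinarith
      exact max_lt d1 d2
    exact le_of_lt (by simpa [Real.dist_eq] using hKδ this)
  -- the double integral of the difference
  have hKcont := continuous_Kmix hF
  have hinnerint : ∀ u' : ℝ, IntervalIntegrable (fun v' => Kmix F (u', v'))
      MeasureTheory.volume v0 (v0+e) := fun u' =>
    ((hKcont.comp (continuous_const.prodMk continuous_id)).intervalIntegrable _ _)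
  have houterint : IntervalIntegrable (fun u' => ∫ v' in v0..(v0+e), Kmix F (u', v'))
      MeasureTheory.volume u0 (u0+e) := by
    apply Continuous.intervalIntegrable
    exact continuous_parametric_intervalIntegral_of_continuous'
      (f := fun u' v' => Kmix F (u', v')) (μ := MeasureTheory.volume)
      (by exact hKcont) v0 (v0+e)
  set cst := Kmix F (u, v) with hcst
  have inner : ∀ u' : ℝ, (∫ v' in v0..(v0+e), (Kmix F (u', v') - cst))
      = (∫ v' in v0..(v0+e), Kmix F (u', v')) - e * cst := by
    intro u'
    rw [intervalIntegral.integral_sub (hinnerint u') intervalIntegrable_const,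
      intervalIntegral.integral_const]
    simp [smul_eq_mul]
  have key : SD F u0 (u0+e) v0 (v0+e) - e^2 * cst =
      ∫ u' in u0..(u0+e), (∫ v' in v0..(v0+e), (Kmix F (u', v') - cst)) := by
    have h2 : (fun u' => ∫ v' in v0..(v0+e), (Kmix F (u', v') - cst)) =
        fun u' => (∫ v' in v0..(v0+e), Kmix F (u', v')) - e * cst := funext inner
    rw [h2, intervalIntegral.integral_sub houterint intervalIntegrable_const,
      intervalIntegral.integral_const, sd_eq_integral' hF]
    simp [smul_eq_mul]
    ring
  have hbound : |SD F u0 (u0+e) v0 (v0+e) - e^2 * cst| ≤ ε/2 * e * e := by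
    rw [key]
    have houter : ∀ u' ∈ Set.uIoc u0 (u0+e),
        ‖∫ v' in v0..(v0+e), (Kmix F (u', v') - cst)‖ ≤ ε/2 * e := by
      intro u' hu'
      rw [Set.uIoc_of_le (by linarith)] at hu'
      have hinner : ∀ v' ∈ Set.uIoc v0 (v0+e), ‖Kmix F (u', v') - cst‖ ≤ ε/2 := by
        intro v' hv'
        rw [Set.uIoc_of_le (by linarith)] at hv'
        exact hptbound u' v' hu'.1.le hu'.2 hv'.1.le hv'.2
      calc ‖∫ v' in v0..(v0+e), (Kmix F (u', v') - cst)‖ ≤ ε/2 * |v0 + e - v0| :=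
            intervalIntegral.norm_integral_le_of_norm_le_const hinner
        _ = ε/2 * e := by rw [add_sub_cancel_left, abs_of_pos he']
    calc ‖∫ u' in u0..(u0+e), (∫ v' in v0..(v0+e), (Kmix F (u', v') - cst))‖
        ≤ ε/2 * e * |u0 + e - u0| := intervalIntegral.norm_integral_le_of_norm_le_const houter
      _ = ε/2 * e * e := by rw [add_sub_cancel_left, abs_of_pos he']
  rw [Real.dist_eq]
  have he2 : (0:ℝ) < e^2 := by positivity
  have hre : SD F u0 (u0+e) v0 (v0+e) / e^2 - cst
      = (SD F u0 (u0+e) v0 (v0+e) - e^2 * cst) / e^2 := by field_simp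
  rw [hre, abs_div, abs_of_pos he2]
  calc |SD F u0 (u0+e) v0 (v0+e) - e^2*cst| / e^2 ≤ (ε/2 * e * e) / e^2 := by gcongr
    _ = ε/2 := by field_simp
    _ < ε := by linarith

lemma psd (hF : ContDiff ℝ 2 F) (hcc : c ≤ c')
    (hnn : ∀ p q : ℝ, p ∈ Icc c c' → q ∈ Icc c c' → 0 ≤ SD F p q p q)
    (hCS : ∀ p q r s : ℝ, p ∈ Icc c c' → q ∈ Icc c c' → r ∈ Icc c c' → s ∈ Icc c c' →
      SD F p q r s ≤ Real.sqrt (SD F p q p q) * Real.sqrt (SD F r s r s))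
    (hpos : ∀ z ∈ Icc c c', 0 < Kmix F (z, z))
    {u v : ℝ} (hu : u ∈ Icc c c') (hv : v ∈ Icc c c') :
    Kmix F (u, v) ≤ Real.sqrt (Kmix F (u, u)) * Real.sqrt (Kmix F (v, v)) := by
  rcases eq_or_lt_of_le hcc with heq | hlt
  · have hu' : u = c := le_antisymm (heq ▸ hu.2) hu.1
    have hv' : v = c := le_antisymm (heq ▸ hv.2) hv.1
    rw [hu', hv', Real.mul_self_sqrt (hpos c ⟨le_rfl, hcc⟩).le]
  · set L := c' - c with hLdef
    have hL : 0 < L := sub_pos.mpr hlt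
    have heseq : Tendsto (fun n : ℕ => L / ((n:ℝ)+1)) atTop (𝓝[>] (0:ℝ)) := by
      rw [tendsto_nhdsWithin_iff]
      constructor
      · have h0 : Tendsto (fun n : ℕ => 1/((n:ℝ)+1)) atTop (𝓝 0) :=
          tendsto_one_div_add_atTop_nhds_zero_nat
        have := h0.const_mul L
        simpa [mul_one_div, div_eq_mul_inv] using this
      · exact Filter.Eventually.of_forall fun n => by simp only [Set.mem_Ioi]; positivity
    have tUV := (tendsto_sd hF hu.1 hv.1).comp heseq
    have tUU := (tendsto_sd hF hu.1 hu.1).comp heseq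
    have tVV := (tendsto_sd hF hv.1 hv.1).comp heseq
    refine le_of_tendsto_of_tendsto' tUV (tUU.sqrt.mul tVV.sqrt) ?_
    intro n
    simp only [Function.comp_apply]
    set e := L / ((n:ℝ)+1) with hedef
    have he : 0 < e := by positivity
    have heL : e ≤ L := by
      rw [hedef, div_le_iff₀ (by positivity)]
      nlinarith [Nat.cast_nonneg (α := ℝ) n]
    have hin : ∀ w : ℝ, w ∈ Icc c c' → max c (w - e) ∈ Icc c c' ∧ max c (w - e) + e ∈ Icc c c' := by
      intro w hw
      have h1 : max c (w - e) ≤ w := max_le hw.1 (by linarith)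
      refine ⟨⟨le_max_left _ _, h1.trans hw.2⟩, ⟨by linarith [le_max_left c (w-e)], ?_⟩⟩
      have : max c (w - e) + e = max (c + e) w := by
        rcases le_total c (w - e) with h | h
        · rw [max_eq_right h, max_eq_right (by linarith)]; ring
        · rw [max_eq_left h, max_eq_left (by linarith)]
      rw [this]
      exact max_le (by linarith) hw.2
    obtain ⟨hu0, hu1⟩ := hin u hu
    obtain ⟨hv0, hv1⟩ := hin v hv
    have h1 := hCS _ _ _ _ hu0 hu1 hv0 hv1
    have hnnu := hnn _ _ hu0 hu1
    have hnnv := hnn _ _ hv0 hv1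
    have hsq : ∀ S : ℝ, 0 ≤ S → Real.sqrt (S / e^2) = Real.sqrt S / e := by
      intro S hS
      rw [Real.sqrt_div hS, Real.sqrt_sq he.le]
    rw [hsq _ hnnu, hsq _ hnnv]
    rw [div_mul_div_comm, ← sq]
    exact div_le_div_of_nonneg_right h1 (by positivity) |>.trans_eq rfl



section Ints

open MeasureTheory

variable {k : ℝ × ℝ → ℝ} {g : ℝ → ℝ}

lemma double_swap (s t : ℝ) :
    (∫ u in t..s, ∫ v in t..s, k (u,v)) = ∫ u in s..t, ∫ v in s..t, k (u,v) := by
  rw [integral_symm]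
  have h1 : (fun u => ∫ v in s..t, k (u,v)) = fun u => -∫ v in t..s, k (u,v) := by
    funext u; rw [integral_symm]
  rw [h1, intervalIntegral.integral_neg]

lemma double_le (hk : Continuous k) (hg : Continuous g) {t s : ℝ} (hts : t ≤ s)
    (hpt : ∀ u ∈ Icc t s, ∀ v ∈ Icc t s, k (u,v) ≤ g u * g v) :
    (∫ u in t..s, ∫ v in t..s, k (u,v)) ≤ (∫ ξ in t..s, g ξ)^2 := by
  have hkint : ∀ u : ℝ, IntervalIntegrable (fun v => k (u,v)) volume t s := fun u =>
    (hk.comp (continuous_const.prodMk continuous_id)).intervalIntegrable _ _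
  have houter : IntervalIntegrable (fun u => ∫ v in t..s, k (u,v)) volume t s := by
    apply Continuous.intervalIntegrable
    exact continuous_parametric_intervalIntegral_of_continuous'
      (f := fun u v => k (u, v)) (μ := volume) (by exact hk) t s
  have step1 : ∀ u ∈ Icc t s, (∫ v in t..s, k (u,v)) ≤ g u * ∫ ξ in t..s, g ξ := by
    intro u hu
    rw [← intervalIntegral.integral_const_mul]
    exact integral_mono_on hts (hkint u) ((continuous_const.mul hg).intervalIntegrable _ _)
      (fun v hv => hpt u hu v hv)
  calc (∫ u in t..s, ∫ v in t..s, k (u,v)) ≤ ∫ u in t..s, g u * (∫ ξ in t..s, g ξ) :=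
        integral_mono_on hts houter ((hg.mul continuous_const).intervalIntegrable _ _) step1
    _ = (∫ ξ in t..s, g ξ) * (∫ ξ in t..s, g ξ) := integral_mul_const _ _
    _ = (∫ ξ in t..s, g ξ)^2 := (sq _).symm

lemma double_ge (hk : Continuous k) {t s m : ℝ} (hts : t ≤ s)
    (hpt : ∀ u ∈ Icc t s, ∀ v ∈ Icc t s, m ≤ k (u,v)) :
    m * (s - t)^2 ≤ ∫ u in t..s, ∫ v in t..s, k (u,v) := by
  have hkint : ∀ u : ℝ, IntervalIntegrable (fun v => k (u,v)) volume t s := fun u =>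
    (hk.comp (continuous_const.prodMk continuous_id)).intervalIntegrable _ _
  have houter : IntervalIntegrable (fun u => ∫ v in t..s, k (u,v)) volume t s := by
    apply Continuous.intervalIntegrable
    exact continuous_parametric_intervalIntegral_of_continuous'
      (f := fun u v => k (u, v)) (μ := volume) (by exact hk) t s
  have step1 : ∀ u ∈ Icc t s, m * (s - t) ≤ ∫ v in t..s, k (u,v) := by
    intro u hu
    have h0 : (∫ _ in t..s, m) = (s - t) * m := by
      rw [intervalIntegral.integral_const, smul_eq_mul]
    calc m * (s - t) = ∫ _ in t..s, m := by rw [h0]; ring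
      _ ≤ ∫ v in t..s, k (u,v) :=
        integral_mono_on hts intervalIntegrable_const (hkint u) (fun v hv => hpt u hu v hv)
  calc m * (s-t)^2 = ∫ _ in t..s, m * (s - t) := by
        rw [intervalIntegral.integral_const, smul_eq_mul]; ring
    _ ≤ ∫ u in t..s, ∫ v in t..s, k (u,v) :=
        integral_mono_on hts intervalIntegrable_const houter step1

end Ints


section Ints2

open MeasureTheory

variable {k : ℝ × ℝ → ℝ} {g : ℝ → ℝ}

lemma double_le' (hk : Continuous k) (hg : Continuous g) {c c' s t : ℝ}
    (hs : s ∈ Icc c c') (ht : t ∈ Icc c c')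
    (hpt : ∀ u ∈ Icc c c', ∀ v ∈ Icc c c', k (u,v) ≤ g u * g v) :
    (∫ u in t..s, ∫ v in t..s, k (u,v)) ≤ (∫ ξ in t..s, g ξ)^2 := by
  rcases le_total t s with h | h
  · exact double_le hk hg h fun u hu v hv =>
      hpt u (Icc_subset_Icc ht.1 hs.2 hu) v (Icc_subset_Icc ht.1 hs.2 hv)
  · have h2 := double_le hk hg h fun u hu v hv =>
      hpt u (Icc_subset_Icc hs.1 ht.2 hu) v (Icc_subset_Icc hs.1 ht.2 hv)
    calc (∫ u in t..s, ∫ v in t..s, k (u,v)) = ∫ u in s..t, ∫ v in s..t, k (u,v) :=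
          double_swap s t
      _ ≤ (∫ ξ in s..t, g ξ)^2 := h2
      _ = (∫ ξ in t..s, g ξ)^2 := by rw [intervalIntegral.integral_symm t s, neg_sq]

lemma sq_neg' (x : ℝ) : (-x)^2 = x^2 := by ring

lemma coord_lower (hk : Continuous k) {c c' m : ℝ} (hm : 0 < m)
    (hmle : ∀ z ∈ Icc c c', m ≤ k (z,z)) {ε : ℝ} (hε0 : 0 < ε) (hε1 : ε ≤ 1) :
    ∃ δ > 0, ∀ s ∈ Icc c c', ∀ t ∈ Icc c c', |s - t| ≤ δ →
      (1 - ε) * (∫ ξ in t..s, Real.sqrt (k (ξ,ξ)))^2 ≤ ∫ u in t..s, ∫ v in t..s, k (u,v) := by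
  set ε' := ε * m / 2 with hε'
  have hε'pos : 0 < ε' := by positivity
  have hUC : UniformContinuousOn k (Icc c c' ×ˢ Icc c c') :=
    (IsCompact.prod isCompact_Icc isCompact_Icc).uniformContinuousOn_of_continuous
      hk.continuousOn
  rw [Metric.uniformContinuousOn_iff_le] at hUC
  obtain ⟨δ, hδpos, hδ⟩ := hUC ε' hε'pos
  refine ⟨δ, hδpos, ?_⟩
  have key : ∀ s ∈ Icc c c', ∀ t ∈ Icc c c', t ≤ s → |s - t| ≤ δ →
      (1 - ε) * (∫ ξ in t..s, Real.sqrt (k (ξ,ξ)))^2 ≤ ∫ u in t..s, ∫ v in t..s, k (u,v) := by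
    intro s hs t ht hts habs
    have hsub : Icc t s ⊆ Icc c c' := Icc_subset_Icc ht.1 hs.2
    have hclose : ∀ u ∈ Icc t s, ∀ v ∈ Icc t s, |k (u,v) - k (t,t)| ≤ ε' := by
      intro u hu v hv
      have hd : dist ((u,v) : ℝ × ℝ) ((t,t) : ℝ × ℝ) ≤ δ := by
        rw [Prod.dist_eq]
        have d1 : dist u t ≤ δ := by
          rw [Real.dist_eq]
          rw [abs_of_nonneg (by linarith [hts])] at habs
          rw [abs_of_nonneg (by linarith [hu.1])]
          linarith [hu.2]
        have d2 : dist v t ≤ δ := by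
          rw [Real.dist_eq]
          rw [abs_of_nonneg (by linarith [hts])] at habs
          rw [abs_of_nonneg (by linarith [hv.1])]
          linarith [hv.2]
        exact max_le d1 d2
      have := hδ (u, v) (Set.mk_mem_prod (hsub hu) (hsub hv))
        (t, t) (Set.mk_mem_prod (hsub ⟨le_refl t, hts⟩) (hsub ⟨le_refl t, hts⟩)) hd
      rwa [Real.dist_eq] at this
    have hlow : ∀ u ∈ Icc t s, ∀ v ∈ Icc t s, k (t,t) - ε' ≤ k (u,v) := by
      intro u hu v hv
      have := abs_le.mp (hclose u hu v hv)
      linarith [this.1]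
    have hge := double_ge hk hts hlow
    have hgup : ∀ ξ ∈ Icc t s, Real.sqrt (k (ξ,ξ)) ≤ Real.sqrt (k (t,t) + ε') := by
      intro ξ hξ
      apply Real.sqrt_le_sqrt
      have := abs_le.mp (hclose ξ hξ ξ hξ)
      linarith [this.2]
    have hPint : IntervalIntegrable (fun ξ => Real.sqrt (k (ξ,ξ))) volume t s := by
      apply Continuous.intervalIntegrable
      exact (hk.comp (continuous_id.prodMk continuous_id)).sqrt
    have hIub : (∫ ξ in t..s, Real.sqrt (k (ξ,ξ))) ≤ (s - t) * Real.sqrt (k (t,t) + ε') := by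
      calc (∫ ξ in t..s, Real.sqrt (k (ξ,ξ))) ≤ ∫ _ in t..s, Real.sqrt (k (t,t) + ε') :=
            intervalIntegral.integral_mono_on hts hPint intervalIntegrable_const hgup
        _ = (s - t) * Real.sqrt (k (t,t) + ε') := by
            rw [intervalIntegral.integral_const, smul_eq_mul]
    have hInn : 0 ≤ ∫ ξ in t..s, Real.sqrt (k (ξ,ξ)) :=
      intervalIntegral.integral_nonneg hts fun ξ _ => Real.sqrt_nonneg _
    have hIsq : (∫ ξ in t..s, Real.sqrt (k (ξ,ξ)))^2 ≤ (s - t)^2 * (k (t,t) + ε') := by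
      have h1 : ((s-t) * Real.sqrt (k (t,t) + ε'))^2 = (s-t)^2 * (k (t,t) + ε') := by
        rw [mul_pow, Real.sq_sqrt (by linarith [hmle t (hsub ⟨le_refl t, hts⟩)])]
      calc (∫ ξ in t..s, Real.sqrt (k (ξ,ξ)))^2 ≤ ((s-t) * Real.sqrt (k (t,t) + ε'))^2 :=
            pow_le_pow_left₀ hInn hIub 2
        _ = (s-t)^2 * (k (t,t) + ε') := h1
    have hmt : m ≤ k (t,t) := hmle t (hsub ⟨le_refl t, hts⟩)
    have hmain : (1 - ε) * ((s-t)^2 * (k (t,t) + ε')) ≤ (k (t,t) - ε') * (s-t)^2 := by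
      have hsq : (0:ℝ) ≤ (s-t)^2 := sq_nonneg _
      have hscalar : (1 - ε) * (k (t,t) + ε') ≤ k (t,t) - ε' := by
        nlinarith [mul_le_mul_of_nonneg_left hmt hε0.le, mul_pos hε0 hε'pos]
      calc (1-ε)*((s-t)^2*(k (t,t)+ε')) = ((1-ε)*(k (t,t)+ε'))*(s-t)^2 := by ring
        _ ≤ (k (t,t) - ε')*(s-t)^2 := mul_le_mul_of_nonneg_right hscalar hsq
    calc (1-ε) * (∫ ξ in t..s, Real.sqrt (k (ξ,ξ)))^2
        ≤ (1-ε) * ((s-t)^2 * (k (t,t) + ε')) := by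
          apply mul_le_mul_of_nonneg_left hIsq (by linarith)
      _ ≤ (k (t,t) - ε') * (s-t)^2 := hmain
      _ ≤ ∫ u in t..s, ∫ v in t..s, k (u,v) := hge
  intro s hs t ht habs
  rcases le_total t s with h | h
  · exact key s hs t ht h habs
  · have := key t ht s hs h (by rw [abs_sub_comm]; exact habs)
    rw [double_swap]
    calc (1-ε) * (∫ ξ in t..s, Real.sqrt (k (ξ,ξ)))^2
        = (1-ε) * (∫ ξ in s..t, Real.sqrt (k (ξ,ξ)))^2 := by
          rw [intervalIntegral.integral_symm, sq_neg']
      _ ≤ _ := this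

end Ints2


lemma le_of_sq_le_sq {a b : ℝ} (h : a^2 ≤ b^2) (hb : 0 ≤ b) : a ≤ b := by
  nlinarith [sq_nonneg (a - b), sq_nonneg (a + b)]

lemma partition_t_mono (P : PathPartition) {k l : ℕ} (hkl : k ≤ l) (hl : l ≤ P.n) :
    P.t k ≤ P.t l := by
  induction l, hkl using Nat.le_induction with
  | base => exact le_refl _
  | succ l hkl ih =>
      exact (ih (by omega)).trans (P.mono l (by omega))

lemma partition_t_mem (P : PathPartition) {k : ℕ} (hk : k ≤ P.n) :
    P.t k ∈ Icc (0:ℝ) 1 := by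
  constructor
  · rw [← P.first]; exact partition_t_mono P (Nat.zero_le k) hk
  · rw [← P.last]; exact partition_t_mono P hk le_rfl

end AKSL

open Filter Topology in
set_option maxHeartbeats 2000000 in
/-- Additive kernels: the image under `φ ∘ ψ⁻¹` of the straight line
`ζ̃_t = ψ(φ⁻¹(a)) + t(ψ(φ⁻¹(b)) − ψ(φ⁻¹(a)))` is a path `γ̃` in `ℳ` with end-points
`a, b`, of length `‖ψ(φ⁻¹(b)) − ψ(φ⁻¹(a))‖`. -/
theorem additive_kernel_straight_line_length
    {d : ℕ} (hd : 1 ≤ d)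
    (cl cu : Fin d → ℝ) (hcl : ∀ i, cl i ≤ cu i)
    (Z : Set (EuclideanSpace ℝ (Fin d)))
    (hZdef : Z = {x | ∀ i, x i ∈ Icc (cl i) (cu i)})
    (α : Fin d → ℝ) (hα : ∀ i, 0 < α i)
    (fi : Fin d → ℝ → ℝ → ℝ)
    (hfiC2 : ∀ i, ContDiff ℝ 2 (fun p : ℝ × ℝ => fi i p.1 p.2))
    (hfipos : ∀ i, ∀ z ∈ Icc (cl i) (cu i), 0 < mixedPartial (fi i) z)
    (φ : EuclideanSpace ℝ (Fin d) → l2)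
    (hφ : ∀ x ∈ Z, ∀ y ∈ Z, (inner ℝ (φ x) (φ y) : ℝ) = ∑ i, α i * fi i (x i) (y i))
    -- Assumption 1
    (hA1 : ∀ x ∈ Z, ∀ y ∈ Z, x ≠ y →
      ∃ a ∈ Z, (∑ i, α i * fi i (x i) (a i)) ≠ ∑ i, α i * fi i (y i) (a i))
    -- φ⁻¹ : the inverse of φ on ℳ
    (φinv : l2 → EuclideanSpace ℝ (Fin d)) (hφinv : ∀ x ∈ Z, φinv (φ x) = x)
    -- ψ⁻¹ : the coordinatewise inverse of ψ on ψ(𝒵)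
    (psiInv : EuclideanSpace ℝ (Fin d) → EuclideanSpace ℝ (Fin d))
    (hpsiInv₁ : ∀ x ∈ Z, psiInv (psiMap α fi cl x) = x)
    (hpsiInv₂ : ∀ w ∈ psiMap α fi cl '' Z, psiMap α fi cl (psiInv w) = w)
    (a b : l2) (ha : a ∈ φ '' Z) (hb : b ∈ φ '' Z) :
    IsPathIn (φ '' Z) a b (fun t => φ (psiInv (psiMap α fi cl (φinv a) +
        t • (psiMap α fi cl (φinv b) - psiMap α fi cl (φinv a))))) ∧
      pathLength (fun t => φ (psiInv (psiMap α fi cl (φinv a) +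
          t • (psiMap α fi cl (φinv b) - psiMap α fi cl (φinv a))))) =
        ENNReal.ofReal ‖psiMap α fi cl (φinv b) - psiMap α fi cl (φinv a)‖ := by
  classical
  obtain ⟨xa, hxa, rfl⟩ := ha
  obtain ⟨xb, hxb, rfl⟩ := hb
  rw [hφinv xa hxa, hφinv xb hxb]
  set ψ := psiMap α fi cl with hψdef
  set D := ψ xb - ψ xa with hDdef
  set γ : ℝ → l2 := fun t => φ (psiInv (ψ xa + t • D)) with hγdef
  set ζ : ℝ → EuclideanSpace ℝ (Fin d) := fun t => ψ xa + t • D with hζdef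
  have hγζ : ∀ t, γ t = φ (psiInv (ζ t)) := fun _ => rfl
  -- per-coordinate kernels
  set K : Fin d → ℝ × ℝ → ℝ := fun i => AKSL.Kmix (fun p : ℝ × ℝ => fi i p.1 p.2) with hKdef
  have hKcont : ∀ i, Continuous (K i) := fun i => AKSL.continuous_Kmix (hfiC2 i)
  have hmp : ∀ i z, mixedPartial (fi i) z = K i (z, z) := fun i z =>
    AKSL.mixedPartial_eq_Kmix (hfiC2 i) z (fun _ _ => rfl)
  have hpos : ∀ i, ∀ z ∈ Icc (cl i) (cu i), 0 < K i (z,z) := fun i z hz =>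
    hmp i z ▸ hfipos i z hz
  set sq : Fin d → ℝ → ℝ := fun i ξ => Real.sqrt (K i (ξ, ξ)) with hsqdef
  have hsqcont : ∀ i, Continuous (sq i) := fun i =>
    ((hKcont i).comp (continuous_id.prodMk continuous_id)).sqrt
  set P : Fin d → ℝ → ℝ := fun i s => ∫ ξ in (cl i)..s, sq i ξ with hPdef
  have hsqint : ∀ (i : Fin d) (a' b' : ℝ), IntervalIntegrable (sq i) MeasureTheory.volume a' b' :=
    fun i a' b' => (hsqcont i).intervalIntegrable _ _
  have hPsub : ∀ (i : Fin d) (s t : ℝ), P i s - P i t = ∫ ξ in t..s, sq i ξ := fun i s t =>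
    intervalIntegral.integral_interval_sub_left (hsqint i _ _) (hsqint i _ _)
  have hψ_eq : ∀ (x : EuclideanSpace ℝ (Fin d)) (i : Fin d),
      ψ x i = Real.sqrt (α i) * P i (x i) := by
    intro x i
    show Real.sqrt (α i) * (∫ ξ in (cl i)..(x i), Real.sqrt (mixedPartial (fi i) ξ)) = _
    congr 1
    apply intervalIntegral.integral_congr
    intro ξ _
    simp only [hsqdef, hmp]
  have hZmem : ∀ x ∈ Z, ∀ i, x i ∈ Icc (cl i) (cu i) := by
    intro x hx i
    rw [hZdef] at hx
    exact hx i
  -- points varying in one coordinate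
  set pt : Fin d → ℝ → EuclideanSpace ℝ (Fin d) :=
    fun i w => WithLp.toLp 2 (fun j => if j = i then w else cl j) with hptdef
  have hptZ : ∀ (i : Fin d), ∀ w ∈ Icc (cl i) (cu i), pt i w ∈ Z := by
    intro i w hw
    rw [hZdef]
    intro j
    by_cases h : j = i
    · subst h
      have he : pt j w j = w := by simp [hptdef]
      show pt j w j ∈ Icc (cl j) (cu j)
      rw [he]; exact hw
    · have he : pt i w j = cl j := by simp [hptdef, h]
      show pt i w j ∈ Icc (cl j) (cu j)
      rw [he]; exact ⟨le_rfl, hcl j⟩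
  have hinner4 : ∀ (i : Fin d) (p q r s' : ℝ), p ∈ Icc (cl i) (cu i) → q ∈ Icc (cl i) (cu i) →
      r ∈ Icc (cl i) (cu i) → s' ∈ Icc (cl i) (cu i) →
      (inner ℝ (φ (pt i q) - φ (pt i p)) (φ (pt i s') - φ (pt i r)) : ℝ)
        = α i * AKSL.SD (fun pr : ℝ × ℝ => fi i pr.1 pr.2) p q r s' := by
    intro i p q r s' hp hq hr hs'
    rw [inner_sub_left, inner_sub_right, inner_sub_right,
      hφ _ (hptZ _ _ hq) _ (hptZ _ _ hs'), hφ _ (hptZ _ _ hq) _ (hptZ _ _ hr),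
      hφ _ (hptZ _ _ hp) _ (hptZ _ _ hs'), hφ _ (hptZ _ _ hp) _ (hptZ _ _ hr)]
    have hsum : (∑ j, α j * fi j (pt i q j) (pt i s' j)) - (∑ j, α j * fi j (pt i q j) (pt i r j))
        - ((∑ j, α j * fi j (pt i p j) (pt i s' j)) - (∑ j, α j * fi j (pt i p j) (pt i r j)))
        = ∑ j, (α j * fi j (pt i q j) (pt i s' j) - α j * fi j (pt i q j) (pt i r j)
            - (α j * fi j (pt i p j) (pt i s' j) - α j * fi j (pt i p j) (pt i r j))) := by
      rw [← Finset.sum_sub_distrib, ← Finset.sum_sub_distrib, ← Finset.sum_sub_distrib]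
    rw [hsum, Finset.sum_eq_single i]
    · simp only [hptdef, if_pos rfl, AKSL.SD, if_true]
      ring
    · intro j _ hj
      simp only [hptdef, if_neg hj]
      ring
    · intro h
      exact absurd (Finset.mem_univ i) h
  have hSDnn : ∀ (i : Fin d) (p q : ℝ), p ∈ Icc (cl i) (cu i) → q ∈ Icc (cl i) (cu i) →
      0 ≤ AKSL.SD (fun pr : ℝ × ℝ => fi i pr.1 pr.2) p q p q := by
    intro i p q hp hq
    have h2 : (0:ℝ) ≤ inner ℝ (φ (pt i q) - φ (pt i p)) (φ (pt i q) - φ (pt i p)) :=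
      real_inner_self_nonneg
    rw [hinner4 i p q p q hp hq hp hq] at h2
    exact nonneg_of_mul_nonneg_right h2 (hα i)
  have hSDCS : ∀ (i : Fin d) (p q r s' : ℝ), p ∈ Icc (cl i) (cu i) → q ∈ Icc (cl i) (cu i) →
      r ∈ Icc (cl i) (cu i) → s' ∈ Icc (cl i) (cu i) →
      AKSL.SD (fun pr : ℝ × ℝ => fi i pr.1 pr.2) p q r s'
        ≤ Real.sqrt (AKSL.SD (fun pr : ℝ × ℝ => fi i pr.1 pr.2) p q p q)
          * Real.sqrt (AKSL.SD (fun pr : ℝ × ℝ => fi i pr.1 pr.2) r s' r s') := by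
    intro i p q r s' hp hq hr hs'
    have hcs := real_inner_le_norm (φ (pt i q) - φ (pt i p)) (φ (pt i s') - φ (pt i r))
    rw [hinner4 i p q r s' hp hq hr hs'] at hcs
    rw [norm_eq_sqrt_real_inner, norm_eq_sqrt_real_inner,
      hinner4 i p q p q hp hq hp hq, hinner4 i r s' r s' hr hs' hr hs'] at hcs
    rw [Real.sqrt_mul (hα i).le, Real.sqrt_mul (hα i).le] at hcs
    have hαsq : Real.sqrt (α i) * Real.sqrt (α i) = α i := Real.mul_self_sqrt (hα i).le
    have hre : Real.sqrt (α i) * Real.sqrt (AKSL.SD (fun pr : ℝ × ℝ => fi i pr.1 pr.2) p q p q)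
        * (Real.sqrt (α i) * Real.sqrt (AKSL.SD (fun pr : ℝ × ℝ => fi i pr.1 pr.2) r s' r s'))
        = α i * (Real.sqrt (AKSL.SD (fun pr : ℝ × ℝ => fi i pr.1 pr.2) p q p q)
          * Real.sqrt (AKSL.SD (fun pr : ℝ × ℝ => fi i pr.1 pr.2) r s' r s')) := by
      rw [mul_mul_mul_comm, hαsq]
    rw [hre] at hcs
    exact le_of_mul_le_mul_left hcs (hα i)
  have hpsd : ∀ (i : Fin d), ∀ u ∈ Icc (cl i) (cu i), ∀ v ∈ Icc (cl i) (cu i),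
      K i (u,v) ≤ sq i u * sq i v := fun i u hu v hv =>
    AKSL.psd (hfiC2 i) (hcl i) (hSDnn i) (hSDCS i) (hpos i) hu hv
  have hnormsq : ∀ x ∈ Z, ∀ y ∈ Z, ‖φ x - φ y‖^2
      = ∑ i, α i * ∫ u in (y i)..(x i), ∫ v in (y i)..(x i), K i (u,v) := by
    intro x hx y hy
    rw [← real_inner_self_eq_norm_sq]
    rw [inner_sub_left, inner_sub_right, inner_sub_right,
      hφ x hx x hx, hφ x hx y hy, hφ y hy x hx, hφ y hy y hy]
    rw [← Finset.sum_sub_distrib, ← Finset.sum_sub_distrib, ← Finset.sum_sub_distrib]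
    apply Finset.sum_congr rfl
    intro i _
    rw [AKSL.sd_eq_integral (hfiC2 i) (y i) (x i) (y i) (x i)]
    ring
  have hEnormsq : ∀ w : EuclideanSpace ℝ (Fin d), ‖w‖^2 = ∑ i, (w i)^2 := by
    intro w
    rw [EuclideanSpace.norm_eq, Real.sq_sqrt (Finset.sum_nonneg fun i _ => sq_nonneg _)]
    apply Finset.sum_congr rfl
    intro i _
    rw [Real.norm_eq_abs, sq_abs]
  -- continuity of the primitive
  have hPcont : ∀ i, Continuous (P i) := by
    intro i
    have h1 : Continuous (Function.uncurry (fun (_ : ℝ) ξ => sq i ξ)) :=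
      (hsqcont i).comp continuous_snd
    simpa [hPdef] using
      intervalIntegral.continuous_parametric_intervalIntegral_of_continuous
        (μ := MeasureTheory.volume) (a₀ := cl i) h1 continuous_id
  have hζcoord : ∀ (t : ℝ) (i : Fin d), ζ t i = ψ xa i + t * (ψ xb i - ψ xa i) := by
    intro t i
    show (ψ xa + t • D) i = _
    simp [hDdef, PiLp.add_apply, PiLp.smul_apply, PiLp.sub_apply, smul_eq_mul]
  -- construction of the coordinatewise preimage w
  have hwex : ∀ t : ℝ, ∃ wt : EuclideanSpace ℝ (Fin d),
      t ∈ Icc (0:ℝ) 1 → wt ∈ Z ∧ ψ wt = ζ t := by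
    intro t
    by_cases ht : t ∈ Icc (0:ℝ) 1
    swap
    · exact ⟨xa, fun h => absurd h ht⟩
    have hex : ∀ i, ∃ wi, wi ∈ Icc (cl i) (cu i) ∧ Real.sqrt (α i) * P i wi = ζ t i := by
      intro i
      have hcont : ContinuousOn (fun s => Real.sqrt (α i) * P i s) (uIcc (xa i) (xb i)) :=
        (continuous_const.mul (hPcont i)).continuousOn
      have hsubset := intermediate_value_uIcc hcont
      have hmem : ζ t i ∈ uIcc (Real.sqrt (α i) * P i (xa i)) (Real.sqrt (α i) * P i (xb i)) := by
        rw [← hψ_eq xa i, ← hψ_eq xb i, hζcoord t i]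
        rcases le_total (ψ xa i) (ψ xb i) with h | h
        · rw [uIcc_of_le h]
          exact ⟨by nlinarith [ht.1, ht.2], by nlinarith [ht.1, ht.2]⟩
        · rw [uIcc_of_ge h]
          exact ⟨by nlinarith [ht.1, ht.2], by nlinarith [ht.1, ht.2]⟩
      obtain ⟨wi, hwi, hwieq⟩ := hsubset hmem
      exact ⟨wi, uIcc_subset_Icc (hZmem xa hxa i) (hZmem xb hxb i) hwi, hwieq⟩
    choose wi hwi1 hwi2 using hex
    refine ⟨(WithLp.toLp 2 wi : EuclideanSpace ℝ (Fin d)), fun _ => ⟨?_, ?_⟩⟩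
    · rw [hZdef]; exact fun i => hwi1 i
    · ext i
      rw [hψ_eq]
      exact hwi2 i
  choose w hw using hwex
  have hwZ : ∀ t ∈ Icc (0:ℝ) 1, w t ∈ Z := fun t ht => (hw t ht).1
  have hwψ : ∀ t ∈ Icc (0:ℝ) 1, ψ (w t) = ζ t := fun t ht => (hw t ht).2
  have hγw : ∀ t ∈ Icc (0:ℝ) 1, psiInv (ζ t) = w t := by
    intro t ht
    rw [← hwψ t ht, hpsiInv₁ _ (hwZ t ht)]
  have hζsub : ∀ (s t : ℝ) (i : Fin d), ζ t i - ζ s i = (t - s) * D i := by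
    intro s t i
    rw [hζcoord t i, hζcoord s i]
    have hDc : D i = ψ xb i - ψ xa i := rfl
    rw [hDc]; ring
  have hζP : ∀ s ∈ Icc (0:ℝ) 1, ∀ t ∈ Icc (0:ℝ) 1, ∀ i : Fin d,
      Real.sqrt (α i) * (P i (w t i) - P i (w s i)) = (t - s) * D i := by
    intro s hs t ht i
    have h1 : ψ (w t) i = ζ t i := by rw [hwψ t ht]
    have h2 : ψ (w s) i = ζ s i := by rw [hwψ s hs]
    rw [hψ_eq] at h1 h2
    rw [mul_sub, h1, h2, hζsub]
  -- the squared norm of a segment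
  have hsegsq : ∀ s ∈ Icc (0:ℝ) 1, ∀ t ∈ Icc (0:ℝ) 1,
      ‖γ t - γ s‖^2 = ∑ i, α i * ∫ u in (w s i)..(w t i), ∫ v in (w s i)..(w t i), K i (u,v) := by
    intro s hs t ht
    rw [hγζ, hγζ, hγw t ht, hγw s hs]
    exact hnormsq _ (hwZ t ht) _ (hwZ s hs)
  -- upper bound for a segment
  have hseg_ub : ∀ s ∈ Icc (0:ℝ) 1, ∀ t ∈ Icc (0:ℝ) 1, ‖γ t - γ s‖ ≤ |t - s| * ‖D‖ := by
    intro s hs t ht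
    have hsq2 : ‖γ t - γ s‖^2 ≤ (|t - s| * ‖D‖)^2 := by
      rw [hsegsq s hs t ht]
      have hterm : ∀ i : Fin d,
          α i * (∫ u in (w s i)..(w t i), ∫ v in (w s i)..(w t i), K i (u,v))
            ≤ ((t - s) * D i)^2 := by
        intro i
        have h1 := AKSL.double_le' (hKcont i) (hsqcont i)
          (hZmem _ (hwZ t ht) i) (hZmem _ (hwZ s hs) i) (hpsd i)
        calc α i * (∫ u in (w s i)..(w t i), ∫ v in (w s i)..(w t i), K i (u,v))
            ≤ α i * (∫ ξ in (w s i)..(w t i), sq i ξ)^2 :=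
              mul_le_mul_of_nonneg_left h1 (hα i).le
          _ = (Real.sqrt (α i) * (P i (w t i) - P i (w s i)))^2 := by
              rw [hPsub, mul_pow, Real.sq_sqrt (hα i).le]
          _ = ((t - s) * D i)^2 := by rw [hζP s hs t ht i]
      calc (∑ i, α i * ∫ u in (w s i)..(w t i), ∫ v in (w s i)..(w t i), K i (u,v))
          ≤ ∑ i, ((t - s) * D i)^2 := Finset.sum_le_sum (fun i _ => hterm i)
        _ = (|t - s| * ‖D‖)^2 := by
            rw [mul_pow, sq_abs, hEnormsq D, Finset.mul_sum]
            apply Finset.sum_congr rfl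
            intro i _
            ring
    exact AKSL.le_of_sq_le_sq hsq2 (by positivity)
  have hζ0 : ζ 0 = ψ xa := by
    show ψ xa + (0:ℝ) • D = ψ xa
    simp
  have hζ1 : ζ 1 = ψ xb := by
    show ψ xa + (1:ℝ) • D = ψ xb
    rw [one_smul, hDdef, add_sub_cancel]
  constructor
  · refine ⟨?_, ?_, ?_, ?_⟩
    · have hlip : LipschitzOnWith ‖D‖₊ γ (Icc 0 1) := by
        apply LipschitzOnWith.of_dist_le_mul
        intro t ht s hs
        rw [dist_eq_norm]
        calc ‖γ t - γ s‖ ≤ |t - s| * ‖D‖ := hseg_ub s hs t ht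
          _ = ↑‖D‖₊ * dist t s := by rw [coe_nnnorm, Real.dist_eq]; ring
      exact hlip.continuousOn
    · intro t ht
      show φ (psiInv (ζ t)) ∈ φ '' Z
      rw [hγw t ht]
      exact Set.mem_image_of_mem φ (hwZ t ht)
    · show φ (psiInv (ζ 0)) = φ xa
      rw [hζ0, hpsiInv₁ xa hxa]
    · show φ (psiInv (ζ 1)) = φ xb
      rw [hζ1, hpsiInv₁ xb hxb]
  · apply le_antisymm
    · apply iSup_le
      intro Pn
      apply ENNReal.ofReal_le_ofReal
      have hterm : ∀ k ∈ Finset.range Pn.n,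
          ‖γ (Pn.t (k+1)) - γ (Pn.t k)‖ ≤ (Pn.t (k+1) - Pn.t k) * ‖D‖ := by
        intro k hk
        have hk' := Finset.mem_range.mp hk
        have h1 := hseg_ub (Pn.t k) (AKSL.partition_t_mem Pn hk'.le) (Pn.t (k+1))
          (AKSL.partition_t_mem Pn hk')
        rwa [abs_of_nonneg (sub_nonneg.mpr (Pn.mono k hk'))] at h1
      simp only [chiSum]
      calc (∑ k ∈ Finset.range Pn.n, ‖γ (Pn.t (k+1)) - γ (Pn.t k)‖)
          ≤ ∑ k ∈ Finset.range Pn.n, (Pn.t (k+1) - Pn.t k) * ‖D‖ :=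
            Finset.sum_le_sum hterm
        _ = (Pn.t Pn.n - Pn.t 0) * ‖D‖ := by rw [← Finset.sum_mul, Finset.sum_range_sub]
        _ = ‖D‖ := by rw [Pn.first, Pn.last]; ring
    · -- lower bound on the path length
      have hmex : ∀ i : Fin d, ∃ mi : ℝ, 0 < mi ∧ ∀ z ∈ Icc (cl i) (cu i), mi ≤ K i (z,z) := by
        intro i
        obtain ⟨z₀, hz₀, hzmin⟩ := isCompact_Icc.exists_isMinOn (nonempty_Icc.mpr (hcl i))
          (((hKcont i).comp (continuous_id.prodMk continuous_id)).continuousOn)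
        exact ⟨K i (z₀, z₀), hpos i z₀ hz₀, fun z hz => hzmin hz⟩
      choose m hm0 hmle using hmex
      haveI : Nonempty (Fin d) := ⟨⟨0, hd⟩⟩
      have hPlip : ∀ i : Fin d, ∀ p ∈ Icc (cl i) (cu i), ∀ q ∈ Icc (cl i) (cu i),
          Real.sqrt (m i) * |p - q| ≤ |P i p - P i q| := by
        intro i
        have key : ∀ p q : ℝ, q ≤ p → p ∈ Icc (cl i) (cu i) → q ∈ Icc (cl i) (cu i) →
            Real.sqrt (m i) * (p - q) ≤ P i p - P i q := by
          intro p q hqp hp hq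
          rw [hPsub i p q]
          have h1 := intervalIntegral.integral_mono_on hqp intervalIntegrable_const
            (hsqint i q p)
            (fun ξ hξ => Real.sqrt_le_sqrt (hmle i ξ (Icc_subset_Icc hq.1 hp.2 hξ)))
          rwa [intervalIntegral.integral_const, smul_eq_mul, mul_comm] at h1
        intro p hp q hq
        rcases le_total q p with h | h
        · have h1 := key p q h hp hq
          have h2 : (0:ℝ) ≤ p - q := by linarith
          rw [abs_of_nonneg h2, abs_of_nonneg (by
            nlinarith [Real.sqrt_nonneg (m i)] : (0:ℝ) ≤ P i p - P i q)]
          exact h1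
        · have h1 := key q p h hq hp
          have h2 : (0:ℝ) ≤ q - p := by linarith
          rw [abs_sub_comm p q, abs_sub_comm (P i p) (P i q), abs_of_nonneg h2,
            abs_of_nonneg (by nlinarith [Real.sqrt_nonneg (m i)] : (0:ℝ) ≤ P i q - P i p)]
          exact h1
      have hlow : ∀ ε : ℝ, 0 < ε → ε ≤ 1 →
          ENNReal.ofReal (Real.sqrt (1 - ε) * ‖D‖) ≤ pathLength γ := by
        intro ε hε0 hε1
        have hδex : ∀ i : Fin d, ∃ δi, 0 < δi ∧ ∀ s ∈ Icc (cl i) (cu i), ∀ t ∈ Icc (cl i) (cu i),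
            |s - t| ≤ δi → (1 - ε) * (∫ ξ in t..s, Real.sqrt (K i (ξ,ξ)))^2
              ≤ ∫ u in t..s, ∫ v in t..s, K i (u,v) := by
          intro i
          obtain ⟨δi, hδi0, hδi⟩ := AKSL.coord_lower (hKcont i) (hm0 i) (hmle i) hε0 hε1
          exact ⟨δi, hδi0, hδi⟩
        choose δ hδ0 hδle using hδex
        set δ' := Finset.univ.inf' Finset.univ_nonempty δ with hδ'def
        have hδ'0 : 0 < δ' := by
          rw [hδ'def, Finset.lt_inf'_iff]
          exact fun i _ => hδ0 i
        set C : Fin d → ℝ := fun i => |D i| / (Real.sqrt (α i) * Real.sqrt (m i)) with hCdef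
        set Cm := Finset.univ.sup' Finset.univ_nonempty C with hCmdef
        have hCm0 : 0 ≤ Cm := by
          have h1 : (0:ℝ) ≤ C (Classical.arbitrary (Fin d)) := by
            rw [hCdef]; positivity
          exact h1.trans (Finset.le_sup' C (Finset.mem_univ _))
        obtain ⟨n0, hn0⟩ := exists_nat_gt (Cm / δ')
        set n : ℕ := n0 + 1 with hndef
        have hn_pos : 0 < (n:ℝ) := by positivity
        have hCn : Cm / n ≤ δ' := by
          have h1 : Cm / δ' < (n:ℝ) := by
            refine lt_of_lt_of_le hn0 ?_
            exact_mod_cast Nat.le_succ n0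
          rw [div_le_iff₀ hn_pos]
          have h2 := (div_lt_iff₀ hδ'0).mp h1
          linarith
        set Pn : PathPartition :=
          { n := n, t := fun k => (k:ℝ)/n,
            first := by simp,
            last := div_self (ne_of_gt hn_pos),
            mono := fun k _ => by
              show ((k:ℝ))/(n:ℝ) ≤ (((k+1:ℕ)):ℝ)/(n:ℝ)
              gcongr
              exact Nat.le_succ k } with hPndef
        have hseg_lb : ∀ k : ℕ, k < n →
            Real.sqrt (1-ε) * (1/n) * ‖D‖ ≤ ‖γ (((k+1:ℕ):ℝ)/n) - γ ((k:ℝ)/n)‖ := by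
          intro k hk
          have hs01 : (k:ℝ)/n ∈ Icc (0:ℝ) 1 :=
            ⟨by positivity, by rw [div_le_one hn_pos]; exact_mod_cast hk.le⟩
          have ht01 : ((k+1:ℕ):ℝ)/n ∈ Icc (0:ℝ) 1 :=
            ⟨by positivity, by rw [div_le_one hn_pos]; exact_mod_cast hk⟩
          set s : ℝ := (k:ℝ)/n with hsdef
          set t : ℝ := ((k+1:ℕ):ℝ)/n with htdef
          have hts : t - s = 1/n := by
            rw [htdef, hsdef, div_sub_div_same]
            push_cast
            ring_nf
          have hmove : ∀ i : Fin d, |w t i - w s i| ≤ δ i := by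
            intro i
            have h1 := hζP s hs01 t ht01 i
            have h2 := hPlip i (w t i) (hZmem _ (hwZ t ht01) i) (w s i) (hZmem _ (hwZ s hs01) i)
            have h3 : Real.sqrt (α i) * |P i (w t i) - P i (w s i)| = |t - s| * |D i| := by
              rw [← abs_of_nonneg (Real.sqrt_nonneg (α i)), ← abs_mul, h1, abs_mul]
            have h4 : Real.sqrt (α i) * (Real.sqrt (m i) * |w t i - w s i|) ≤ |t-s| * |D i| := by
              rw [← h3]
              exact mul_le_mul_of_nonneg_left h2 (Real.sqrt_nonneg _)
            have hden : 0 < Real.sqrt (α i) * Real.sqrt (m i) := by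
              have := hα i; have := hm0 i; positivity
            have h5 : |w t i - w s i| ≤ |t - s| * C i := by
              have hCi : C i = |D i| / (Real.sqrt (α i) * Real.sqrt (m i)) := rfl
              rw [hCi, mul_div_assoc', le_div_iff₀ hden]
              calc |w t i - w s i| * (Real.sqrt (α i) * Real.sqrt (m i))
                  = Real.sqrt (α i) * (Real.sqrt (m i) * |w t i - w s i|) := by ring
                _ ≤ |t-s| * |D i| := h4
            have hts' : |t - s| = 1/n := by rw [hts, abs_of_pos (by positivity)]
            calc |w t i - w s i| ≤ |t-s| * C i := h5
              _ = (1/n) * C i := by rw [hts']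
              _ ≤ (1/n) * Cm := by
                  apply mul_le_mul_of_nonneg_left (Finset.le_sup' C (Finset.mem_univ i))
                  positivity
              _ = Cm / n := by ring
              _ ≤ δ' := hCn
              _ ≤ δ i := Finset.inf'_le δ (Finset.mem_univ i)
          have hsq2 : (Real.sqrt (1-ε) * (1/n) * ‖D‖)^2 ≤ ‖γ t - γ s‖^2 := by
            rw [hsegsq s hs01 t ht01]
            have hterm : ∀ i : Fin d, (1-ε) * ((t-s) * D i)^2
                ≤ α i * ∫ u in (w s i)..(w t i), ∫ v in (w s i)..(w t i), K i (u,v) := by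
              intro i
              have h1 := hδle i (w t i) (hZmem _ (hwZ t ht01) i) (w s i)
                (hZmem _ (hwZ s hs01) i) (hmove i)
              have h2 : ((t-s) * D i)^2 = α i * (∫ ξ in (w s i)..(w t i), sq i ξ)^2 := by
                rw [← hζP s hs01 t ht01 i, ← hPsub, mul_pow, Real.sq_sqrt (hα i).le]
              calc (1-ε) * ((t-s) * D i)^2
                  = α i * ((1-ε) * (∫ ξ in (w s i)..(w t i), sq i ξ)^2) := by rw [h2]; ring
                _ ≤ α i * ∫ u in (w s i)..(w t i), ∫ v in (w s i)..(w t i), K i (u,v) := by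
                    apply mul_le_mul_of_nonneg_left ?_ (hα i).le
                    exact h1
            calc (Real.sqrt (1-ε) * (1/n) * ‖D‖)^2
                = (1-ε) * ((1/(n:ℝ))^2 * ‖D‖^2) := by
                  rw [mul_pow, mul_pow, Real.sq_sqrt (by linarith : (0:ℝ) ≤ 1-ε)]
                  ring
              _ = ∑ i, (1-ε) * ((t-s) * D i)^2 := by
                  rw [hEnormsq D, hts, Finset.mul_sum, Finset.mul_sum]
                  apply Finset.sum_congr rfl
                  intro i _
                  ring
              _ ≤ ∑ i, α i * ∫ u in (w s i)..(w t i), ∫ v in (w s i)..(w t i), K i (u,v) :=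
                  Finset.sum_le_sum (fun i _ => hterm i)
          exact AKSL.le_of_sq_le_sq hsq2 (norm_nonneg _)
        have hchi : Real.sqrt (1-ε) * ‖D‖ ≤ chiSum γ Pn := by
          have hchieq : chiSum γ Pn = ∑ k ∈ Finset.range n, ‖γ (((k+1:ℕ):ℝ)/n) - γ ((k:ℝ)/n)‖ :=
            rfl
          rw [hchieq]
          calc Real.sqrt (1-ε) * ‖D‖ = ∑ _k ∈ Finset.range n, Real.sqrt (1-ε) * (1/n) * ‖D‖ := by
                rw [Finset.sum_const, Finset.card_range, nsmul_eq_mul]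
                field_simp
            _ ≤ ∑ k ∈ Finset.range n, ‖γ (((k+1:ℕ):ℝ)/n) - γ ((k:ℝ)/n)‖ :=
                Finset.sum_le_sum (fun k hk => hseg_lb k (Finset.mem_range.mp hk))
        calc ENNReal.ofReal (Real.sqrt (1-ε) * ‖D‖) ≤ ENNReal.ofReal (chiSum γ Pn) :=
              ENNReal.ofReal_le_ofReal hchi
          _ ≤ pathLength γ := le_iSup (fun Q : PathPartition => ENNReal.ofReal (chiSum γ Q)) Pn
      -- let ε → 0
      have h0 : Filter.Tendsto (fun nn : ℕ => 1/((nn:ℝ)+2)) Filter.atTop (nhds 0) := by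
        have h1 := tendsto_inv_atTop_zero.comp
          (Filter.tendsto_atTop_add_const_right Filter.atTop (2:ℝ) tendsto_natCast_atTop_atTop)
        simpa [one_div, Function.comp_def] using h1
      have hlim : Filter.Tendsto
          (fun nn : ℕ => ENNReal.ofReal (Real.sqrt (1 - 1/((nn:ℝ)+2)) * ‖D‖)) Filter.atTop
          (nhds (ENNReal.ofReal ‖D‖)) := by
        have h1 : Filter.Tendsto (fun nn : ℕ => Real.sqrt (1 - 1/((nn:ℝ)+2)) * ‖D‖)
            Filter.atTop (nhds ‖D‖) := by
          have h2 := ((tendsto_const_nhds (x := (1:ℝ)).sub h0).sqrt).mul_const ‖D‖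
          simpa using h2
        exact (ENNReal.continuous_ofReal.continuousAt).tendsto.comp h1
      apply le_of_tendsto hlim
      apply Filter.Eventually.of_forall
      intro nn
      apply hlow
      · positivity
      · rw [div_le_one (by positivity)]
        linarith [Nat.cast_nonneg (α := ℝ) nn]
end
end

section
/- In the additive-kernel setting, for any x, y ∈ 𝒵 the geodesic distance in ℳ between φ(x) and φ(y) equals ‖ψ(x) − ψ(y)‖, i.e. the Euclidean distance between x and y after their coordinatewise monotone transformation by ψ. -/
/-!
Write `ψ = psiMap α fi cl`. By the fundamental theorem of calculus in both variables,
`‖φ a - φ b‖² = ∑ᵢ αᵢ ∫∫_{[bᵢ, aᵢ]²} ∂²fᵢ/∂x∂y`, while `‖ψ a - ψ b‖² = ∑ᵢ αᵢ (∫_{[bᵢ, aᵢ]} g)²`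
with `g(ξ) = (∂²fᵢ/∂x∂y (ξ, ξ))^{1/2}`. Near the diagonal `∂²fᵢ/∂x∂y (s, t)` is close to
`g(s) g(t)` in ratio, so `‖φ a - φ b‖ / ‖ψ a - ψ b‖ → 1` as `a` and `b` approach each other
in `𝒵`. Path length can be computed from arbitrarily fine partitions, on which only this ratio
matters. So a path in `ℳ`, lifted through the homeomorphism `φ : 𝒵 → ℳ`, is at least as long
as the segment from `ψ x` to `ψ y`; and since `ψ 𝒵` is a box, that segment lifts through `ψ` to
a path in `𝒵` whose image under `φ` has length exactly `‖ψ x - ψ y‖`.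
-/

open Set
open scoped ENNReal BigOperators

noncomputable section

open Filter Function Topology Uniformity intervalIntegral

def kernelSqDist {X : Type*} (F : X → X → ℝ) (a b : X) : ℝ := F a a - F a b - F b a + F b b

lemma kernelSqDist_comm {X : Type*} (F : X → X → ℝ) (a b : X) :
    kernelSqDist F a b = kernelSqDist F b a := by
  unfold kernelSqDist; ring

lemma norm_sub_sq_eq_kernelSqDist {X E : Type*} [NormedAddCommGroup E] [InnerProductSpace ℝ E]
    {φ : X → E} {k : X → X → ℝ} {Z : Set X} (hk : ∀ x ∈ Z, ∀ y ∈ Z, inner ℝ (φ x) (φ y) = k x y)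
    {a b : X} (ha : a ∈ Z) (hb : b ∈ Z) : ‖φ a - φ b‖ ^ 2 = kernelSqDist k a b := by
  rw [← real_inner_self_eq_norm_sq, inner_sub_sub_self, hk a ha a ha, hk a ha b hb, hk b hb a ha,
    hk b hb b hb, kernelSqDist]

section MixedPartial

def partialFst (F : ℝ → ℝ → ℝ) (p : ℝ × ℝ) : ℝ :=
  fderiv ℝ (fun q : ℝ × ℝ => F q.1 q.2) p (1, 0)

def mixedPartialAt (F : ℝ → ℝ → ℝ) (p : ℝ × ℝ) : ℝ := fderiv ℝ (partialFst F) p (0, 1)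

variable {F : ℝ → ℝ → ℝ} (hF : ContDiff ℝ 2 (fun p : ℝ × ℝ => F p.1 p.2))
include hF

lemma hasDerivAt_partialFst (x y : ℝ) : HasDerivAt (fun x => F x y) (partialFst F (x, y)) x := by
  have hFx : HasFDerivAt (fun q : ℝ × ℝ => F q.1 q.2) _ (x, y) :=
    (hF.differentiable (by norm_num) (x, y)).hasFDerivAt
  exact hFx.comp_hasDerivAt x ((hasDerivAt_id x).prodMk (hasDerivAt_const x y))

lemma contDiff_partialFst : ContDiff ℝ 1 (partialFst F) :=
  (hF.fderiv_right (m := 1) (by norm_num)).clm_apply contDiff_const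

lemma hasDerivAt_mixedPartialAt (x y : ℝ) :
    HasDerivAt (fun y => partialFst F (x, y)) (mixedPartialAt F (x, y)) y := by
  have hPx : HasFDerivAt (partialFst F) _ (x, y) :=
    ((contDiff_partialFst hF).differentiable one_ne_zero (x, y)).hasFDerivAt
  exact hPx.comp_hasDerivAt y ((hasDerivAt_const y x).prodMk (hasDerivAt_id y))

lemma continuous_mixedPartialAt : Continuous (mixedPartialAt F) :=
  ((contDiff_partialFst hF).continuous_fderiv one_ne_zero).clm_apply continuous_const

lemma mixedPartial_eq_mixedPartialAt (z : ℝ) : mixedPartial F z = mixedPartialAt F (z, z) := by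
  have h : (fun y => deriv (fun x => F x y) z) = fun y => partialFst F (z, y) :=
    funext fun y => (hasDerivAt_partialFst hF z y).deriv
  rw [mixedPartial, h, (hasDerivAt_mixedPartialAt hF z z).deriv]

lemma continuous_sqrt_mixedPartial : Continuous fun z => √(mixedPartial F z) := by
  simp_rw [mixedPartial_eq_mixedPartialAt hF]
  exact ((continuous_mixedPartialAt hF).comp (continuous_id.prodMk continuous_id)).sqrt

lemma kernelSqDist_eq_integral_integral (a b : ℝ) :
    kernelSqDist F a b = ∫ s in b..a, ∫ t in b..a, mixedPartialAt F (s, t) := by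
  have hP y : IntervalIntegrable (fun s => partialFst F (s, y)) MeasureTheory.volume b a :=
    ((contDiff_partialFst hF).continuous.comp
      (continuous_id.prodMk continuous_const)).intervalIntegrable _ _
  have inner s : ∫ t in b..a, mixedPartialAt F (s, t) = partialFst F (s, a) - partialFst F (s, b) :=
    integral_eq_sub_of_hasDerivAt (fun t _ => hasDerivAt_mixedPartialAt hF s t)
      (((continuous_mixedPartialAt hF).comp
        (continuous_const.prodMk continuous_id)).intervalIntegrable _ _)
  have outer y : ∫ s in b..a, partialFst F (s, y) = F a y - F b y :=
    integral_eq_sub_of_hasDerivAt (fun s _ => hasDerivAt_partialFst hF s y) (hP y)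
  simp_rw [inner]
  rw [integral_sub (hP a) (hP b), outer, outer, kernelSqDist]
  ring

end MixedPartial

section NearDiagonal

variable {D : ℝ × ℝ → ℝ} {l u K : ℝ}

/-- The quotient `D (s, t) / (√D(s,s) √D(t,t))` is uniformly continuous on the square and equals
`1` on the diagonal. -/
lemma exists_near_diagonal_le (hD : Continuous D) (hpos : ∀ z ∈ Icc l u, 0 < D (z, z))
    (hK : 1 < K) :
    ∃ δ > 0, ∀ s ∈ Icc l u, ∀ t ∈ Icc l u, dist s t < δ →
      D (s, t) ≤ K * (√(D (s, s)) * √(D (t, t))) ∧ √(D (s, s)) * √(D (t, t)) ≤ K * D (s, t) := by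
  set G : ℝ × ℝ → ℝ := fun p => √(D (p.1, p.1)) * √(D (p.2, p.2))
  have hG : ∀ p ∈ Icc l u ×ˢ Icc l u, 0 < G p := fun p hp =>
    mul_pos (Real.sqrt_pos.2 (hpos _ hp.1)) (Real.sqrt_pos.2 (hpos _ hp.2))
  have hGc : Continuous G := by fun_prop
  have hRc : ContinuousOn (fun p => D p / G p) (Icc l u ×ˢ Icc l u) :=
    hD.continuousOn.div hGc.continuousOn fun p hp => (hG p hp).ne'
  obtain ⟨δ, hδ, hR⟩ := Metric.uniformContinuousOn_iff.1
    ((isCompact_Icc.prod isCompact_Icc).uniformContinuousOn_of_continuous hRc) (1 - K⁻¹)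
    (by simp [inv_lt_one_of_one_lt₀ hK])
  refine ⟨δ, hδ, fun s hs t ht hst => ?_⟩
  have hGst := hG (s, t) ⟨hs, ht⟩
  have hdiag : D (t, t) / G (t, t) = 1 := by
    simp only [G]
    rw [Real.mul_self_sqrt (hpos t ht).le, div_self (hpos t ht).ne']
  have hclose := hR (s, t) ⟨hs, ht⟩ (t, t) ⟨ht, ht⟩ (by simpa [Prod.dist_eq] using hst)
  rw [hdiag, Real.dist_eq, abs_lt, lt_sub_iff_add_lt, sub_lt_iff_lt_add, lt_div_iff₀ hGst,
    div_lt_iff₀ hGst] at hclose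
  have hKinv : K⁻¹ * K = 1 := inv_mul_cancel₀ (by linarith)
  have hKinv' : 2 - K⁻¹ ≤ K := by
    have : 0 ≤ (K - 1) ^ 2 * K⁻¹ := by positivity
    nlinarith
  change D (s, t) ≤ K * G (s, t) ∧ G (s, t) ≤ K * D (s, t)
  constructor <;> nlinarith

end NearDiagonal

section DoubleIntegral

variable {a b : ℝ}

lemma integral_integral_mono_on {f g : ℝ → ℝ → ℝ} (hab : a ≤ b) (hf : Continuous (uncurry f))
    (hg : Continuous (uncurry g)) (h : ∀ s ∈ Icc a b, ∀ t ∈ Icc a b, f s t ≤ g s t) :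
    ∫ s in a..b, ∫ t in a..b, f s t ≤ ∫ s in a..b, ∫ t in a..b, g s t := by
  have hfs s : Continuous (f s) := hf.comp (continuous_const.prodMk continuous_id)
  have hgs s : Continuous (g s) := hg.comp (continuous_const.prodMk continuous_id)
  exact integral_mono_on hab
    ((continuous_parametric_intervalIntegral_of_continuous' hf a b).intervalIntegrable _ _)
    ((continuous_parametric_intervalIntegral_of_continuous' hg a b).intervalIntegrable _ _)
    fun s hs => integral_mono_on hab ((hfs s).intervalIntegrable _ _)
      ((hgs s).intervalIntegrable _ _) (h s hs)

lemma integral_integral_const_mul (K : ℝ) (f : ℝ → ℝ → ℝ) :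
    ∫ s in a..b, ∫ t in a..b, K * f s t = K * ∫ s in a..b, ∫ t in a..b, f s t := by
  simp only [integral_const_mul]

lemma integral_integral_mul (g : ℝ → ℝ) :
    ∫ s in a..b, ∫ t in a..b, g s * g t = (∫ s in a..b, g s) ^ 2 := by
  simp only [integral_const_mul, integral_mul_const, sq]

end DoubleIntegral

lemma exists_integral_integral_le_sq {D : ℝ × ℝ → ℝ} {l u K : ℝ} (hD : Continuous D)
    (hpos : ∀ z ∈ Icc l u, 0 < D (z, z)) (hK : 1 < K) :
    ∃ δ > 0, ∀ a ∈ Icc l u, ∀ b ∈ Icc l u, b ≤ a → a - b < δ →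
      ∫ s in b..a, ∫ t in b..a, D (s, t) ≤ K * (∫ ξ in b..a, √(D (ξ, ξ))) ^ 2 ∧
      (∫ ξ in b..a, √(D (ξ, ξ))) ^ 2 ≤ K * ∫ s in b..a, ∫ t in b..a, D (s, t) := by
  obtain ⟨δ, hδ, hnear⟩ := exists_near_diagonal_le hD hpos hK
  refine ⟨δ, hδ, fun a ha b hb hba hab => ?_⟩
  have hsq : ∀ s ∈ Icc b a, ∀ t ∈ Icc b a, D (s, t) ≤ K * (√(D (s, s)) * √(D (t, t))) ∧
      √(D (s, s)) * √(D (t, t)) ≤ K * D (s, t) := fun s hs t ht =>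
    hnear s ⟨hb.1.trans hs.1, hs.2.trans ha.2⟩ t ⟨hb.1.trans ht.1, ht.2.trans ha.2⟩
      (by rw [Real.dist_eq, abs_lt]; constructor <;> linarith [hs.1, hs.2, ht.1, ht.2])
  have hG : Continuous fun p : ℝ × ℝ => √(D (p.1, p.1)) * √(D (p.2, p.2)) := by fun_prop
  rw [← integral_integral_mul]
  constructor
  · calc ∫ s in b..a, ∫ t in b..a, D (s, t)
        ≤ ∫ s in b..a, ∫ t in b..a, K * (√(D (s, s)) * √(D (t, t))) :=
          integral_integral_mono_on hba hD (continuous_const.mul hG) fun s hs t ht =>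
            (hsq s hs t ht).1
      _ = _ := integral_integral_const_mul K _
  · calc ∫ s in b..a, ∫ t in b..a, √(D (s, s)) * √(D (t, t))
        ≤ ∫ s in b..a, ∫ t in b..a, K * D (s, t) :=
          integral_integral_mono_on hba hG (continuous_const.mul hD) fun s hs t ht =>
            (hsq s hs t ht).2
      _ = _ := integral_integral_const_mul K _

lemma eventually_kernelSqDist_le {F : ℝ → ℝ → ℝ} {l u K : ℝ}
    (hF : ContDiff ℝ 2 (fun p : ℝ × ℝ => F p.1 p.2)) (hpos : ∀ z ∈ Icc l u, 0 < mixedPartial F z)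
    (hK : 1 < K) :
    ∀ᶠ p in 𝓤 ℝ, p.1 ∈ Icc l u → p.2 ∈ Icc l u →
      kernelSqDist F p.1 p.2 ≤ K * (∫ ξ in p.2..p.1, √(mixedPartial F ξ)) ^ 2 ∧
      (∫ ξ in p.2..p.1, √(mixedPartial F ξ)) ^ 2 ≤ K * kernelSqDist F p.1 p.2 := by
  simp_rw [mixedPartial_eq_mixedPartialAt hF] at hpos ⊢
  obtain ⟨δ, hδ, hle⟩ := exists_integral_integral_le_sq (continuous_mixedPartialAt hF) hpos hK
  refine Metric.mem_uniformity_dist.2 ⟨δ, hδ, fun a b hab ha hb => ?_⟩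
  rw [Real.dist_eq, abs_lt] at hab
  rcases le_total b a with hba | hab'
  · rw [kernelSqDist_eq_integral_integral hF]
    exact hle a ha b hb hba (by linarith)
  · rw [kernelSqDist_comm, integral_symm, neg_sq, kernelSqDist_eq_integral_integral hF]
    exact hle b hb a ha hab' (by linarith)

def AsymptoticallyIsometricOn {X E F : Type*} [UniformSpace X] [SeminormedAddCommGroup E]
    [SeminormedAddCommGroup F] (φ : X → E) (ψ : X → F) (Z : Set X) : Prop :=
  ∀ C > 1, ∀ᶠ p in 𝓤 X, p.1 ∈ Z → p.2 ∈ Z →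
    ‖φ p.1 - φ p.2‖ ≤ C * ‖ψ p.1 - ψ p.2‖ ∧ ‖ψ p.1 - ψ p.2‖ ≤ C * ‖φ p.1 - φ p.2‖

namespace AsymptoticallyIsometricOn

variable {X E F : Type*} [UniformSpace X] [SeminormedAddCommGroup E] [SeminormedAddCommGroup F]
  {φ φ' : X → E} {ψ ψ' : X → F} {Z : Set X}

lemma congr (h : AsymptoticallyIsometricOn φ ψ Z) (hφ : EqOn φ φ' Z) (hψ : EqOn ψ ψ' Z) :
    AsymptoticallyIsometricOn φ' ψ' Z := fun C hC =>
  (h C hC).mono fun p hp h₁ h₂ => by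
    rw [← hφ h₁, ← hφ h₂, ← hψ h₁, ← hψ h₂]; exact hp h₁ h₂

lemma comp {Y : Type*} [UniformSpace Y] (h : AsymptoticallyIsometricOn φ ψ Z) {c : Y → X}
    {s : Set Y} (hc : UniformContinuousOn c s) (hcs : MapsTo c s Z) :
    AsymptoticallyIsometricOn (φ ∘ c) (ψ ∘ c) s := fun C hC =>
  (eventually_inf_principal.1 (hc (h C hC))).mono fun _ hp h₁ h₂ =>
    hp ⟨h₁, h₂⟩ (hcs h₁) (hcs h₂)

lemma continuousOn (h : AsymptoticallyIsometricOn φ ψ Z) (hψ : ContinuousOn ψ Z) :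
    ContinuousOn φ Z := by
  intro a ha
  have hle : ∀ᶠ b in 𝓝[Z] a, ‖φ b - φ a‖ ≤ 2 * ‖ψ b - ψ a‖ := by
    refine eventually_nhdsWithin_iff.2 (Filter.mem_of_superset (mem_nhds_left a (h 2 one_lt_two))
      fun b hb hbZ => ?_)
    rw [norm_sub_rev, norm_sub_rev (ψ b)]
    exact (hb ha hbZ).1
  rw [ContinuousWithinAt, tendsto_iff_norm_sub_tendsto_zero]
  refine squeeze_zero' (Eventually.of_forall fun _ => norm_nonneg _) hle ?_
  simpa using ((Tendsto.sub (hψ a ha) (tendsto_const_nhds (x := ψ a))).norm.const_mul 2)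

end AsymptoticallyIsometricOn

namespace PathPartition

lemma le_of_le (P : PathPartition) {k l : ℕ} (hkl : k ≤ l) (hl : l ≤ P.n) : P.t k ≤ P.t l := by
  induction l, hkl using Nat.le_induction with
  | base => exact le_rfl
  | succ l _ ih => exact (ih (by omega)).trans (P.mono l (by omega))

lemma mem_Icc (P : PathPartition) {k : ℕ} (hk : k ≤ P.n) : P.t k ∈ Icc (0 : ℝ) 1 :=
  ⟨P.first ▸ P.le_of_le k.zero_le hk, P.last ▸ P.le_of_le hk le_rfl⟩

def uniform (n : ℕ) (hn : n ≠ 0) : PathPartition where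
  n := n
  t k := min (k / n : ℝ) 1
  first := by simp
  last := by simp [hn]
  mono k _ := min_le_min_right _ (by gcongr; simp)

lemma uniform_t {n k : ℕ} (hn : n ≠ 0) (hk : k ≤ n) : (uniform n hn).t k = k / n :=
  min_eq_left (div_le_one_of_le₀ (by exact_mod_cast hk) n.cast_nonneg)

end PathPartition

section PathLength

variable {E F : Type*} [NormedAddCommGroup E] [NormedAddCommGroup F]

lemma norm_sub_le_chiSum (γ : ℝ → E) (P : PathPartition) : ‖γ 1 - γ 0‖ ≤ chiSum γ P := by
  rw [← P.last, ← P.first, ← Finset.sum_range_sub (fun k => γ (P.t k))]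
  exact norm_sum_le _ _

lemma pathLength_le_of_norm_sub_le {γ : ℝ → E} {K : ℝ}
    (h : ∀ s ∈ Icc (0 : ℝ) 1, ∀ t ∈ Icc (0 : ℝ) 1, s ≤ t → ‖γ t - γ s‖ ≤ K * (t - s)) :
    pathLength γ ≤ ENNReal.ofReal K := by
  refine iSup_le fun P => ENNReal.ofReal_le_ofReal ?_
  calc chiSum γ P ≤ ∑ k ∈ Finset.range P.n, K * (P.t (k + 1) - P.t k) :=
        Finset.sum_le_sum fun k hk => h _ (P.mem_Icc (Finset.mem_range.1 hk).le) _
          (P.mem_Icc (Finset.mem_range.1 hk)) (P.mono k (Finset.mem_range.1 hk))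
    _ = K := by rw [← Finset.mul_sum, Finset.sum_range_sub (fun k => P.t k), P.last, P.first]; ring

lemma norm_sub_le_of_forall_sub_lt {γ : ℝ → E} {s t K δ : ℝ} (hδ : 0 < δ) (hst : s ≤ t)
    (h : ∀ u ∈ Icc s t, ∀ v ∈ Icc s t, u ≤ v → v - u < δ → ‖γ v - γ u‖ ≤ K * (v - u)) :
    ‖γ t - γ s‖ ≤ K * (t - s) := by
  obtain ⟨m, hm⟩ := exists_nat_gt ((t - s) / δ)
  have hm0 : (0 : ℝ) < m := lt_of_le_of_lt (div_nonneg (sub_nonneg.2 hst) hδ.le) hm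
  set p : ℕ → ℝ := fun r => s + r * ((t - s) / m)
  have hp : ∀ r ≤ m, p r ∈ Icc s t := fun r hr => by
    have : (r : ℝ) * ((t - s) / m) ≤ t - s := by
      rw [mul_div_left_comm]
      exact mul_le_of_le_one_right (sub_nonneg.2 hst) ((div_le_one hm0).2 (by exact_mod_cast hr))
    exact ⟨le_add_of_nonneg_right (by positivity), by linarith⟩
  have hstep : ∀ r, p (r + 1) - p r = (t - s) / m := fun r => by simp only [p]; push_cast; ring
  have hpm : p m = t := by simp only [p]; field_simp; ring
  calc ‖γ t - γ s‖ = ‖∑ r ∈ Finset.range m, (γ (p (r + 1)) - γ (p r))‖ := by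
        rw [Finset.sum_range_sub (fun r => γ (p r)), hpm]; simp [p]
    _ ≤ ∑ r ∈ Finset.range m, K * ((t - s) / m) := by
        refine (norm_sum_le _ _).trans (Finset.sum_le_sum fun r hr => ?_)
        have hr := Finset.mem_range.1 hr
        rw [← hstep r]
        refine h _ (hp r hr.le) _ (hp (r + 1) hr) ?_ ?_
        · linarith [hstep r, div_nonneg (sub_nonneg.2 hst) hm0.le]
        rw [hstep, div_lt_iff₀ hm0]
        rwa [div_lt_iff₀ hδ, mul_comm] at hm
    _ = K * (t - s) := by rw [Finset.sum_const, Finset.card_range, nsmul_eq_mul]; field_simp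

end PathLength

namespace AsymptoticallyIsometricOn

variable {E F : Type*} [NormedAddCommGroup E] [NormedAddCommGroup F] {γ : ℝ → E} {μ : ℝ → F}

lemma pathLength_le {K : ℝ} (h : AsymptoticallyIsometricOn γ μ (Icc 0 1))
    (hμ : ∀ s ∈ Icc (0 : ℝ) 1, ∀ t ∈ Icc (0 : ℝ) 1, s ≤ t → ‖μ t - μ s‖ ≤ K * (t - s)) :
    pathLength γ ≤ ENNReal.ofReal K := by
  have key : ∀ C > 1, pathLength γ ≤ ENNReal.ofReal (C * K) := fun C hC => by
    obtain ⟨δ, hδ, hclose⟩ := Metric.mem_uniformity_dist.1 (h C hC)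
    refine pathLength_le_of_norm_sub_le fun s hs t ht hst => ?_
    refine norm_sub_le_of_forall_sub_lt hδ hst fun u hu v hv huv hvu => ?_
    have hu' : u ∈ Icc (0 : ℝ) 1 := ⟨hs.1.trans hu.1, hu.2.trans ht.2⟩
    have hv' : v ∈ Icc (0 : ℝ) 1 := ⟨hs.1.trans hv.1, hv.2.trans ht.2⟩
    have hdist : dist v u < δ := by rw [Real.dist_eq, abs_lt]; constructor <;> linarith
    calc ‖γ v - γ u‖ ≤ C * ‖μ v - μ u‖ := (hclose hdist hv' hu').1
      _ ≤ C * (K * (v - u)) := by gcongr; exact hμ u hu' v hv' huv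
      _ = C * K * (v - u) := by ring
  have hlim : Tendsto (fun C => ENNReal.ofReal (C * K)) (𝓝 1) (𝓝 (ENNReal.ofReal K)) :=
    (ENNReal.continuous_ofReal.comp (continuous_mul_const K)).tendsto' 1 _ (by simp)
  exact ge_of_tendsto (hlim.mono_left nhdsWithin_le_nhds)
    (eventually_nhdsWithin_of_forall (s := Ioi 1) key)

lemma ofReal_norm_sub_le_pathLength (h : AsymptoticallyIsometricOn γ μ (Icc 0 1)) :
    ENNReal.ofReal ‖μ 1 - μ 0‖ ≤ pathLength γ := by
  have key : ∀ C > 1, ENNReal.ofReal (‖μ 1 - μ 0‖ / C) ≤ pathLength γ := fun C hC => by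
    obtain ⟨δ, hδ, hclose⟩ := Metric.mem_uniformity_dist.1 (h C hC)
    obtain ⟨n, hn⟩ := exists_nat_gt δ⁻¹
    have hn0 : (0 : ℝ) < n := (inv_pos.2 hδ).trans hn
    have hn' : n ≠ 0 := by rintro rfl; simp at hn0
    let P := PathPartition.uniform n hn'
    refine le_trans (ENNReal.ofReal_le_ofReal ((div_le_iff₀ (by linarith)).2 ?_))
      (le_iSup (fun P => ENNReal.ofReal (chiSum γ P)) P)
    calc ‖μ 1 - μ 0‖ ≤ chiSum μ P := norm_sub_le_chiSum μ P
      _ ≤ chiSum γ P * C := by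
        rw [chiSum, chiSum, Finset.sum_mul]
        refine Finset.sum_le_sum fun k hk => ?_
        have hk : k < n := Finset.mem_range.1 hk
        rw [mul_comm]
        refine (hclose ?_ (P.mem_Icc hk) (P.mem_Icc hk.le)).2
        change dist ((PathPartition.uniform n hn').t (k + 1)) ((PathPartition.uniform n hn').t k)
          < δ
        rw [PathPartition.uniform_t _ hk, PathPartition.uniform_t _ hk.le, Real.dist_eq, ← sub_div]
        push_cast
        rwa [add_sub_cancel_left, abs_of_pos (by positivity), one_div, inv_lt_comm₀ hn0 hδ]
  have hcont : ContinuousAt (fun C => ENNReal.ofReal (‖μ 1 - μ 0‖ / C)) 1 :=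
    ENNReal.continuous_ofReal.continuousAt.comp (continuousAt_const.div continuousAt_id one_ne_zero)
  have hlim := hcont.tendsto
  rw [div_one] at hlim
  exact le_of_tendsto (hlim.mono_left nhdsWithin_le_nhds)
    (eventually_nhdsWithin_of_forall (s := Ioi 1) key)

end AsymptoticallyIsometricOn

lemma continuousOn_invFunOn_image {X Y : Type*} [TopologicalSpace X] [TopologicalSpace Y]
    [T2Space Y] [Nonempty X] {f : X → Y} {K : Set X} (hK : IsCompact K) (hf : ContinuousOn f K)
    (hinj : InjOn f K) : ContinuousOn (invFunOn f K) (f '' K) := by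
  have : CompactSpace K := isCompact_iff_compactSpace.1 hK
  have hemb : IsClosedEmbedding (K.domRestrict f) := hf.domRestrict.isClosedEmbedding hinj.injective
  have hmaps : MapsTo (invFunOn f K) (f '' K) K := (surjOn_image f K).mapsTo_invFunOn
  have hinv : Continuous (hmaps.restrict (invFunOn f K) (f '' K) K) := by
    rw [hemb.isInducing.continuous_iff]
    exact continuous_subtype_val.congr fun y => ((surjOn_image f K).rightInvOn_invFunOn y.2).symm
  exact continuousOn_iff_continuous_domRestrict.2 (continuous_subtype_val.comp hinv)

section GeodesicDist

variable {X E F : Type*} [UniformSpace X] [Nonempty X] [NormedAddCommGroup E]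
  [NormedAddCommGroup F] {φ : X → E} {ψ : X → F} {Z : Set X} {x y : X}

/-- The lift through `ψ` of the segment from `ψ x` to `ψ y` is mapped by `φ` to a path
whose length is at most `‖ψ x - ψ y‖`. -/
lemma geodesicDist_image_le [NormedSpace ℝ F] (hZ : IsCompact Z)
    (h : AsymptoticallyIsometricOn φ ψ Z) (hψ : ContinuousOn ψ Z) (hψi : InjOn ψ Z) (hx : x ∈ Z)
    (hy : y ∈ Z) (hseg : segment ℝ (ψ x) (ψ y) ⊆ ψ '' Z) :
    geodesicDist (φ '' Z) (φ x) (φ y) ≤ ENNReal.ofReal ‖ψ x - ψ y‖ := by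
  set σ : ℝ → F := fun t => ψ x + t • (ψ y - ψ x)
  have hσ : MapsTo σ (Icc 0 1) (ψ '' Z) := fun t ht =>
    hseg (by rw [segment_eq_image']; exact ⟨t, ht, rfl⟩)
  set c := invFunOn ψ Z ∘ σ
  have hcZ : MapsTo c (Icc 0 1) Z := fun t ht => (surjOn_image ψ Z).mapsTo_invFunOn (hσ ht)
  have hc : ContinuousOn c (Icc 0 1) :=
    (continuousOn_invFunOn_image hZ hψ hψi).comp (by fun_prop : Continuous σ).continuousOn hσ
  have hψc : EqOn (ψ ∘ c) σ (Icc 0 1) := fun t ht =>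
    (surjOn_image ψ Z).rightInvOn_invFunOn (hσ ht)
  have hc0 : c 0 = x := by simpa [c, σ] using hψi.leftInvOn_invFunOn hx
  have hc1 : c 1 = y := by simpa [c, σ] using hψi.leftInvOn_invFunOn hy
  have hpath : IsPathIn (φ '' Z) (φ x) (φ y) (φ ∘ c) :=
    ⟨(h.continuousOn hψ).comp hc hcZ, fun t ht => mem_image_of_mem φ (hcZ ht),
      by simp [hc0], by simp [hc1]⟩
  refine iInf_le_of_le ⟨φ ∘ c, hpath⟩ (AsymptoticallyIsometricOn.pathLength_le
    ((h.comp (isCompact_Icc.uniformContinuousOn_of_continuous hc) hcZ).congr (eqOn_refl _ _) hψc)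
    fun s _ t _ hst => ?_)
  have hσst : σ t - σ s = (t - s) • (ψ y - ψ x) := by simp only [σ, sub_smul]; abel
  rw [hσst, norm_smul, Real.norm_of_nonneg (sub_nonneg.2 hst), norm_sub_rev, mul_comm]

/-- Lift a path in `φ '' Z` through `φ` and compare it, on fine uniform partitions, with its image
under `ψ`. -/
lemma ofReal_le_geodesicDist_image (hZ : IsCompact Z) (h : AsymptoticallyIsometricOn φ ψ Z)
    (hψ : ContinuousOn ψ Z) (hφi : InjOn φ Z) (hx : x ∈ Z) (hy : y ∈ Z) :
    ENNReal.ofReal ‖ψ x - ψ y‖ ≤ geodesicDist (φ '' Z) (φ x) (φ y) := by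
  refine le_iInf fun ⟨γ, hγc, hγZ, hγ0, hγ1⟩ => ?_
  set c := invFunOn φ Z ∘ γ
  have hcZ : MapsTo c (Icc 0 1) Z := fun t ht => (surjOn_image φ Z).mapsTo_invFunOn (hγZ t ht)
  have hc : ContinuousOn c (Icc 0 1) :=
    (continuousOn_invFunOn_image hZ (h.continuousOn hψ) hφi).comp hγc hγZ
  have hφc : EqOn (φ ∘ c) γ (Icc 0 1) := fun t ht =>
    (surjOn_image φ Z).rightInvOn_invFunOn (hγZ t ht)
  have hc0 : c 0 = x := by simpa [c, hγ0] using hφi.leftInvOn_invFunOn hx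
  have hc1 : c 1 = y := by simpa [c, hγ1] using hφi.leftInvOn_invFunOn hy
  have := ((h.comp (isCompact_Icc.uniformContinuousOn_of_continuous hc) hcZ).congr hφc
    (eqOn_refl _ _)).ofReal_norm_sub_le_pathLength
  rwa [comp_apply, comp_apply, hc0, hc1, norm_sub_rev] at this

end GeodesicDist

section Coordinatewise

variable {ι : Type*} {S : ι → Set ℝ} {h : ι → ℝ → ℝ}

lemma isCompact_setOf_forall_mem (hS : ∀ i, IsCompact (S i)) :
    IsCompact {x : EuclideanSpace ℝ ι | ∀ i, x i ∈ S i} := by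
  convert (PiLp.homeomorph 2 fun _ : ι => ℝ).isCompact_preimage.2 (isCompact_univ_pi hS) using 1
  ext x
  simp [PiLp.homeomorph]

lemma continuous_toLp_comp (hh : ∀ i, Continuous (h i)) :
    Continuous fun x : EuclideanSpace ℝ ι => WithLp.toLp 2 fun i => h i (x i) :=
  (PiLp.continuous_toLp 2 _).comp
    (continuous_pi fun i => (hh i).comp (PiLp.continuous_apply 2 (fun _ => ℝ) i))

lemma injOn_toLp_comp (hh : ∀ i, InjOn (h i) (S i)) :
    InjOn (fun x : EuclideanSpace ℝ ι => WithLp.toLp 2 fun i => h i (x i))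
      {x | ∀ i, x i ∈ S i} := fun a ha b hb hab => by
  ext i
  exact hh i (ha i) (hb i) (congrFun (congrArg WithLp.ofLp hab) i)

lemma segment_subset_image_toLp_comp (hS : ∀ i, IsPreconnected (S i))
    (hh : ∀ i, ContinuousOn (h i) (S i)) {x y : EuclideanSpace ℝ ι} (hx : ∀ i, x i ∈ S i)
    (hy : ∀ i, y i ∈ S i) :
    segment ℝ (WithLp.toLp 2 fun i => h i (x i)) (WithLp.toLp 2 fun i => h i (y i)) ⊆
      (fun x : EuclideanSpace ℝ ι => WithLp.toLp 2 fun i => h i (x i)) '' {x | ∀ i, x i ∈ S i} := by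
  rintro _ ⟨a, b, ha, hb, hab, rfl⟩
  have hcoord : ∀ i, a * h i (x i) + b * h i (y i) ∈ h i '' S i := fun i => by
    have hseg : a * h i (x i) + b * h i (y i) ∈ uIcc (h i (x i)) (h i (y i)) := by
      rw [← segment_eq_uIcc]; exact ⟨a, b, ha, hb, hab, rfl⟩
    rw [uIcc_eq_union] at hseg
    rcases hseg with hseg | hseg
    exacts [(hS i).intermediate_value (hx i) (hy i) (hh i) hseg,
      (hS i).intermediate_value (hy i) (hx i) (hh i) hseg]
  choose ξ hξS hξ using hcoord
  exact ⟨WithLp.toLp 2 ξ, hξS, by ext i; simp [hξ i]⟩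

end Coordinatewise

lemma strictMonoOn_integral_of_pos {g : ℝ → ℝ} {l u a : ℝ} (hg : Continuous g)
    (hpos : ∀ z ∈ Icc l u, 0 < g z) : StrictMonoOn (fun s => ∫ ξ in a..s, g ξ) (Icc l u) :=
  fun s hs t ht hst => by
    have := intervalIntegral_pos_of_pos_on (hg.intervalIntegrable s t)
      (fun z hz => hpos z ⟨hs.1.trans hz.1.le, hz.2.le.trans ht.2⟩) hst
    rwa [← integral_interval_sub_left (hg.intervalIntegrable a t) (hg.intervalIntegrable a s),
      sub_pos] at this

section AdditiveKernel

variable {d : ℕ} {α : Fin d → ℝ} {fi : Fin d → ℝ → ℝ → ℝ} {cl cu : Fin d → ℝ}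

lemma norm_psiMap_sub_sq (hα : ∀ i, 0 ≤ α i)
    (hg : ∀ i, Continuous fun ξ => √(mixedPartial (fi i) ξ)) (a b : EuclideanSpace ℝ (Fin d)) :
    ‖psiMap α fi cl a - psiMap α fi cl b‖ ^ 2 =
      ∑ i, α i * (∫ ξ in b i..a i, √(mixedPartial (fi i) ξ)) ^ 2 := by
  rw [EuclideanSpace.norm_sq_eq]
  refine Finset.sum_congr rfl fun i _ => ?_
  simp only [psiMap, WithLp.ofLp_sub, Pi.sub_apply, Real.norm_eq_abs, sq_abs]
  rw [← mul_sub, integral_interval_sub_left ((hg i).intervalIntegrable _ _)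
    ((hg i).intervalIntegrable _ _), mul_pow, Real.sq_sqrt (hα i)]

lemma asymptoticallyIsometricOn_psiMap {E : Type*} [NormedAddCommGroup E] [InnerProductSpace ℝ E]
    (hα : ∀ i, 0 ≤ α i) (hfi : ∀ i, ContDiff ℝ 2 (fun p : ℝ × ℝ => fi i p.1 p.2))
    (hpos : ∀ i, ∀ z ∈ Icc (cl i) (cu i), 0 < mixedPartial (fi i) z)
    {φ : EuclideanSpace ℝ (Fin d) → E}
    (hφ : ∀ x ∈ {x : EuclideanSpace ℝ (Fin d) | ∀ i, x i ∈ Icc (cl i) (cu i)},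
      ∀ y ∈ {x : EuclideanSpace ℝ (Fin d) | ∀ i, x i ∈ Icc (cl i) (cu i)},
      inner ℝ (φ x) (φ y) = ∑ i, α i * fi i (x i) (y i)) :
    AsymptoticallyIsometricOn φ (psiMap α fi cl) {x | ∀ i, x i ∈ Icc (cl i) (cu i)} := by
  intro C hC
  have hC2 : 1 < C ^ 2 := by nlinarith
  have hcoord : ∀ i, ∀ᶠ p in 𝓤 (EuclideanSpace ℝ (Fin d)), p.1 i ∈ Icc (cl i) (cu i) →
      p.2 i ∈ Icc (cl i) (cu i) →
      kernelSqDist (fi i) (p.1 i) (p.2 i) ≤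
          C ^ 2 * (∫ ξ in p.2 i..p.1 i, √(mixedPartial (fi i) ξ)) ^ 2 ∧
        (∫ ξ in p.2 i..p.1 i, √(mixedPartial (fi i) ξ)) ^ 2 ≤
          C ^ 2 * kernelSqDist (fi i) (p.1 i) (p.2 i) := fun i =>
    (EuclideanSpace.proj i).uniformContinuous.eventually
      (eventually_kernelSqDist_le (hfi i) (hpos i) hC2)
  filter_upwards [eventually_all.2 hcoord] with p hp ha hb
  have hφsq : ‖φ p.1 - φ p.2‖ ^ 2 = ∑ i, α i * kernelSqDist (fi i) (p.1 i) (p.2 i) := by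
    rw [norm_sub_sq_eq_kernelSqDist hφ ha hb]
    simp only [kernelSqDist, ← Finset.sum_sub_distrib, ← Finset.sum_add_distrib, mul_sub, mul_add]
  have hψsq := norm_psiMap_sub_sq (cl := cl) hα
    (fun i => continuous_sqrt_mixedPartial (hfi i)) p.1 p.2
  rw [← pow_le_pow_iff_left₀ (norm_nonneg _) (by positivity) two_ne_zero,
    ← pow_le_pow_iff_left₀ (norm_nonneg (psiMap α fi cl p.1 - _)) (by positivity) two_ne_zero,
    mul_pow, mul_pow, hφsq, hψsq, Finset.mul_sum, Finset.mul_sum]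
  constructor <;> refine Finset.sum_le_sum fun i _ => ?_
  · nlinarith [mul_le_mul_of_nonneg_left (hp i (ha i) (hb i)).1 (hα i)]
  · nlinarith [mul_le_mul_of_nonneg_left (hp i (ha i) (hb i)).2 (hα i)]

end AdditiveKernel

theorem additive_kernel_geodesic_distance_general
    {d : ℕ}
    (cl cu : Fin d → ℝ)
    (Z : Set (EuclideanSpace ℝ (Fin d)))
    (hZdef : Z = {x | ∀ i, x i ∈ Icc (cl i) (cu i)})
    (α : Fin d → ℝ) (hα : ∀ i, 0 < α i)
    (fi : Fin d → ℝ → ℝ → ℝ)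
    (hfiC2 : ∀ i, ContDiff ℝ 2 (fun p : ℝ × ℝ => fi i p.1 p.2))
    (hfipos : ∀ i, ∀ z ∈ Icc (cl i) (cu i), 0 < mixedPartial (fi i) z)
    (φ : EuclideanSpace ℝ (Fin d) → l2)
    (hφ : ∀ x ∈ Z, ∀ y ∈ Z, (inner ℝ (φ x) (φ y) : ℝ) = ∑ i, α i * fi i (x i) (y i))
    -- Assumption 1
    (hA1 : ∀ x ∈ Z, ∀ y ∈ Z, x ≠ y →
      ∃ a ∈ Z, (∑ i, α i * fi i (x i) (a i)) ≠ ∑ i, α i * fi i (y i) (a i))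
    (x : EuclideanSpace ℝ (Fin d)) (hx : x ∈ Z)
    (y : EuclideanSpace ℝ (Fin d)) (hy : y ∈ Z) :
    geodesicDist (φ '' Z) (φ x) (φ y) =
      ENNReal.ofReal ‖psiMap α fi cl x - psiMap α fi cl y‖ := by
  subst hZdef
  set Ψ : Fin d → ℝ → ℝ := fun i s => √(α i) * ∫ ξ in cl i..s, √(mixedPartial (fi i) ξ)
  have hg i := continuous_sqrt_mixedPartial (hfiC2 i)
  have hΨ : ∀ i, StrictMonoOn (Ψ i) (Icc (cl i) (cu i)) := fun i =>
    (strictMono_mul_left_of_pos (Real.sqrt_pos.2 (hα i))).comp_strictMonoOn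
      (strictMonoOn_integral_of_pos (hg i) fun z hz => Real.sqrt_pos.2 (hfipos i z hz))
  have hΨc : ∀ i, Continuous (Ψ i) := fun i =>
    continuous_const.mul (continuous_primitive (fun _ _ => (hg i).intervalIntegrable _ _) _)
  have hZ := isCompact_setOf_forall_mem fun i => isCompact_Icc (a := cl i) (b := cu i)
  have hφψ := asymptoticallyIsometricOn_psiMap (fun i => (hα i).le) hfiC2 hfipos hφ
  have hφi : InjOn φ {x | ∀ i, x i ∈ Icc (cl i) (cu i)} := fun a ha b hb hab => by
    by_contra hne
    obtain ⟨w, hw, hne'⟩ := hA1 a ha b hb hne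
    exact hne' (by rw [← hφ a ha w hw, ← hφ b hb w hw, hab])
  have hψ_def : psiMap α fi cl = fun x => WithLp.toLp 2 fun i => Ψ i (x i) := rfl
  rw [hψ_def] at hφψ ⊢
  exact le_antisymm
    (geodesicDist_image_le hZ hφψ (continuous_toLp_comp hΨc).continuousOn
      (injOn_toLp_comp fun i => (hΨ i).injOn) hx hy
      (segment_subset_image_toLp_comp (fun _ => isPreconnected_Icc)
        (fun i => (hΨc i).continuousOn) hx hy))
    (ofReal_le_geodesicDist_image hZ hφψ (continuous_toLp_comp hΨc).continuousOn hφi hx hy)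

/-- Proposition 3, first part. Additive kernels: for `x, y ∈ 𝒵`,
the geodesic distance in `ℳ` between `φ(x)` and `φ(y)` equals `‖ψ(x) − ψ(y)‖`. -/
theorem additive_kernel_geodesic_distance
    {d : ℕ} (hd : 1 ≤ d)
    (cl cu : Fin d → ℝ) (hcl : ∀ i, cl i ≤ cu i)
    (Z : Set (EuclideanSpace ℝ (Fin d)))
    (hZdef : Z = {x | ∀ i, x i ∈ Icc (cl i) (cu i)})
    (α : Fin d → ℝ) (hα : ∀ i, 0 < α i)
    (fi : Fin d → ℝ → ℝ → ℝ)
    (hfiC2 : ∀ i, ContDiff ℝ 2 (fun p : ℝ × ℝ => fi i p.1 p.2))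
    (hfipos : ∀ i, ∀ z ∈ Icc (cl i) (cu i), 0 < mixedPartial (fi i) z)
    (φ : EuclideanSpace ℝ (Fin d) → l2)
    (hφ : ∀ x ∈ Z, ∀ y ∈ Z, (inner ℝ (φ x) (φ y) : ℝ) = ∑ i, α i * fi i (x i) (y i))
    -- Assumption 1
    (hA1 : ∀ x ∈ Z, ∀ y ∈ Z, x ≠ y →
      ∃ a ∈ Z, (∑ i, α i * fi i (x i) (a i)) ≠ ∑ i, α i * fi i (y i) (a i))
    (x : EuclideanSpace ℝ (Fin d)) (hx : x ∈ Z)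
    (y : EuclideanSpace ℝ (Fin d)) (hy : y ∈ Z) :
    geodesicDist (φ '' Z) (φ x) (φ y) =
      ENNReal.ofReal ‖psiMap α fi cl x - psiMap α fi cl y‖ :=
  additive_kernel_geodesic_distance_general cl cu Z hZdef α hα fi hfiC2 hfipos φ hφ hA1 x hx y hy
end
end
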